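/- arXiv:2603.19853 — 9 statements merged into one kernel-verified Lean document; each statement's English description precedes it below -/
import Mathlib

section
/- Let (s, m₁, m₂) be a solution of the random chemostat system on a maximal interval [0, t_M) with nonnegative initial condition (s₀, m₁₀, m₂₀) ∈ ℝ³₊. Then s(t) ≥ 0, m₁(t) ≥ 0, and m₂(t) ≥ 0 for all t ∈ [0, t_M), i.e., the nonnegative octant ℝ³₊ is positively invariant for the system. -/
open Set Filter Topology

/-!
Each biomass equation has the cooperative form `mᵢ' = mᵢ · cᵢ(t) + βᵢ · mⱼ` with `βᵢ ≥ 0` and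
`cᵢ` bounded above as long as `s ≥ 0` (because then `μ(s) ≤ 1`). Hence the sum of the negative
parts of `m₁, m₂` has right Dini derivative at most a constant multiple of itself, and Grönwall's
inequality keeps it at zero. The substrate cannot be the first to leave `[0, ∞)` either: at a zero
of `s` with `m₁ ≥ 0`, `s' = (D + φ) s_in + r d m₁ > 0`. A continuous induction on `[0, T]`
combines the two.
-/

theorem HasDerivWithinAt.eventually_slope_negPart_lt {f : ℝ → ℝ} {f' x r : ℝ}
    (hf : HasDerivWithinAt f f' (Ioi x) x) (hr : 0 < r) (hr' : f x ≤ 0 → -f' < r) :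
    ∀ᶠ z in 𝓝[>] x, (z - x)⁻¹ * ((f z)⁻ - (f x)⁻) < r := by
  rcases le_or_gt (f x) 0 with hx | hx
  · have hslope : ∀ᶠ z in 𝓝[>] x, -r < slope f x z :=
      ((hasDerivWithinAt_iff_tendsto_slope' self_notMem_Ioi).1 hf).eventually
        (lt_mem_nhds (by linarith [hr' hx]))
    filter_upwards [hslope, self_mem_nhdsWithin] with z hz (hxz : x < z)
    rw [slope_def_field, div_eq_inv_mul] at hz
    have hq : 0 < (z - x)⁻¹ := inv_pos.2 (sub_pos.2 hxz)
    rw [negPart_eq_neg.2 hx]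
    rcases le_total (f z) 0 with hz0 | hz0
    · rw [negPart_eq_neg.2 hz0]
      linarith
    · rw [negPart_eq_zero.2 hz0]
      nlinarith
  · filter_upwards [hf.continuousWithinAt.eventually (lt_mem_nhds hx)] with z hz
    simpa [negPart_eq_zero.2 hz.le, negPart_eq_zero.2 hx.le] using hr

theorem HasDerivWithinAt.eventually_nonneg {f : ℝ → ℝ} {f' x : ℝ}
    (hf : HasDerivWithinAt f f' (Ioi x) x) (hx : 0 ≤ f x) (hx' : f x = 0 → 0 < f') :
    ∀ᶠ z in 𝓝[≥] x, 0 ≤ f z := by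
  rw [← Ioi_insert]
  refine mem_nhdsWithin_insert.2 ⟨hx, ?_⟩
  rcases hx.lt_or_eq with hpos | hzero
  · exact (hf.continuousWithinAt.eventually (lt_mem_nhds hpos)).mono fun _ h => h.le
  · have hslope : ∀ᶠ z in 𝓝[>] x, 0 < slope f x z :=
      ((hasDerivWithinAt_iff_tendsto_slope' self_notMem_Ioi).1 hf).eventually
        (lt_mem_nhds (hx' hzero.symm))
    filter_upwards [hslope, self_mem_nhdsWithin] with z hz (hxz : x < z)
    rw [slope_pos_iff_of_le hxz.le, ← hzero] at hz
    exact hz.le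

theorem nonneg_of_neg_deriv_le_sum_negPart {ι : Type*} [Fintype ι] {f f' : ι → ℝ → ℝ}
    {a b K : ℝ} (hK : 0 ≤ K) (hf : ∀ i, ContinuousOn (f i) (Icc a b))
    (hf' : ∀ i, ∀ x ∈ Ico a b, HasDerivWithinAt (f i) (f' i x) (Ioi x) x)
    (bound : ∀ i, ∀ x ∈ Ico a b, f i x ≤ 0 → -f' i x ≤ K * ∑ j, (f j x)⁻)
    (ha : ∀ i, 0 ≤ f i a) :
    ∀ i, ∀ x ∈ Icc a b, 0 ≤ f i x := by
  set V : ℝ → ℝ := fun x => ∑ j, (f j x)⁻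
  set n : ℝ := (Fintype.card ι : ℝ)
  have hV_cont : ContinuousOn V (Icc a b) :=
    continuousOn_finsetSum _ fun j _ => continuous_negPart.comp_continuousOn (hf j)
  have hV_slope : ∀ x ∈ Ico a b, ∀ r, n * K * V x < r →
      ∃ᶠ z in 𝓝[>] x, (z - x)⁻¹ * (V z - V x) < r := by
    intro x hx r hr
    set η := (r - n * K * V x) / (n + 1)
    have hη : 0 < η := div_pos (by linarith) (by positivity)
    have hKV : 0 ≤ K * V x := mul_nonneg hK (Finset.sum_nonneg fun j _ => negPart_nonneg _)
    have hterm : ∀ i, ∀ᶠ z in 𝓝[>] x, (z - x)⁻¹ * ((f i z)⁻ - (f i x)⁻) < K * V x + η :=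
      fun i => (hf' i x hx).eventually_slope_negPart_lt (by positivity)
        fun h => by linarith [bound i x hx h]
    refine Eventually.frequently ?_
    filter_upwards [eventually_all.2 hterm] with z hz
    calc (z - x)⁻¹ * (V z - V x) = ∑ i, (z - x)⁻¹ * ((f i z)⁻ - (f i x)⁻) := by
          simp only [V, ← Finset.sum_sub_distrib, Finset.mul_sum]
      _ ≤ ∑ _i : ι, (K * V x + η) := Finset.sum_le_sum fun i _ => (hz i).le
      _ = n * (K * V x + η) := by rw [Finset.sum_const, Finset.card_univ, nsmul_eq_mul]
      _ < r := by
          have : (n + 1) * η = r - n * K * V x := mul_div_cancel₀ _ (by positivity)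
          nlinarith
  have hV_zero : ∀ x ∈ Icc a b, V x ≤ 0 := by
    intro x hx
    simpa [gronwallBound_ε0_δ0] using
      le_gronwallBound_of_liminf_deriv_right_le (δ := 0) (ε := 0) hV_cont hV_slope
        (by simp [V, negPart_eq_zero.2 (ha _)]) (fun x _ => by rw [add_zero, mul_assoc]) x hx
  intro i x hx
  refine negPart_nonpos.1 (le_trans ?_ (hV_zero x hx))
  exact Finset.single_le_sum (f := fun j => (f j x)⁻) (fun j _ => negPart_nonneg _)
    (Finset.mem_univ i)

theorem nonneg_of_cooperative_deriv {u v cu cv : ℝ → ℝ} {β γ K a b : ℝ}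
    (hβ : 0 ≤ β) (hγ : 0 ≤ γ) (hcu : ∀ x ∈ Ico a b, cu x ≤ K) (hcv : ∀ x ∈ Ico a b, cv x ≤ K)
    (hu : ContinuousOn u (Icc a b)) (hv : ContinuousOn v (Icc a b))
    (hu' : ∀ x ∈ Ico a b, HasDerivWithinAt u (u x * cu x + β * v x) (Ioi x) x)
    (hv' : ∀ x ∈ Ico a b, HasDerivWithinAt v (v x * cv x + γ * u x) (Ioi x) x)
    (hua : 0 ≤ u a) (hva : 0 ≤ v a) :
    ∀ x ∈ Icc a b, 0 ≤ u x ∧ 0 ≤ v x := by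
  have hbound : ∀ {p q c δ : ℝ}, 0 ≤ δ → δ ≤ β + γ → p ≤ 0 → c ≤ K →
      -(p * c + δ * q) ≤ (max K 0 + β + γ) * (p⁻ + q⁻) := by
    intro p q c δ hδ hδβγ hp hc
    rw [negPart_eq_neg.2 hp]
    have hq : -q ≤ q⁻ := neg_le_negPart q
    have hpc : p * max K 0 ≤ p * c := mul_le_mul_of_nonpos_left (hc.trans (le_max_left _ _)) hp
    nlinarith [negPart_nonneg q, le_max_right K 0]
  have key := nonneg_of_neg_deriv_le_sum_negPart (f := ![u, v])
    (f' := ![fun x => u x * cu x + β * v x, fun x => v x * cv x + γ * u x])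
    (K := max K 0 + β + γ) (by positivity)
    (fun i => by fin_cases i <;> assumption)
    (fun i x hx => by fin_cases i <;> simp [hu' x hx, hv' x hx])
    (fun i x hx hx0 => by
      fin_cases i
      · simpa using hbound hβ (by linarith) hx0 (hcu x hx)
      · simpa [add_comm] using hbound hγ (by linarith) hx0 (hcv x hx))
    (fun i => by fin_cases i <;> assumption)
  exact fun x hx => ⟨key 0 x hx, key 1 x hx⟩

theorem HasDerivWithinAt.Ioi_of_mem_Ico {f : ℝ → ℝ} {f' a b t : ℝ}
    (hf : HasDerivWithinAt f f' (Ico a b) t) (ht : t ∈ Ico a b) :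
    HasDerivWithinAt f f' (Ioi t) t :=
  hf.mono_of_mem_nhdsWithin (mem_of_superset (Ico_mem_nhdsGT ht.2) (Ico_subset_Ico_left ht.1))

theorem chemostat_substrate_eventually_nonneg {D sIn c r d α x : ℝ} {φ μ s m₁ m₂ : ℝ → ℝ}
    (hs : HasDerivWithinAt s
      ((D + φ x) * (sIn - α * s x) - c * μ (s x) * (m₁ x + m₂ x) + r * d * m₁ x) (Ioi x) x)
    (hDφ : 0 < D + φ x) (hsIn : 0 < sIn) (hr : 0 ≤ r) (hd : 0 ≤ d) (hμ0 : μ 0 = 0)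
    (hsx : 0 ≤ s x) (hm₁x : 0 ≤ m₁ x) :
    ∀ᶠ z in 𝓝[≥] x, 0 ≤ s z :=
  hs.eventually_nonneg hsx fun h => by
    rw [h, hμ0]
    nlinarith [mul_nonneg (mul_nonneg hr hd) hm₁x, mul_pos hDφ hsIn]

theorem chemostat_biomass_nonneg {D g d α α₁ α₂ r₁ r₂ x b : ℝ} {φ μ s m₁ m₂ : ℝ → ℝ}
    (hg : 0 ≤ g) (hd : 0 ≤ d) (hα : 0 ≤ α) (hα₁ : 0 ≤ α₁) (hα₂ : 0 ≤ α₂)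
    (hr₁ : 0 ≤ r₁) (hr₂ : 0 ≤ r₂)
    (hDφ : ∀ t ∈ Ico x b, 0 ≤ D + φ t) (hμs : ∀ t ∈ Ico x b, μ (s t) ≤ 1)
    (hm₁ : ContinuousOn m₁ (Icc x b)) (hm₂ : ContinuousOn m₂ (Icc x b))
    (hm₁' : ∀ t ∈ Ico x b, HasDerivWithinAt m₁
      (m₁ t * (-d - α * (D + φ t) + g * μ (s t) - r₁ * m₁ t - r₂ * m₂ t - α₁) + α₂ * m₂ t)
      (Ioi t) t)
    (hm₂' : ∀ t ∈ Ico x b, HasDerivWithinAt m₂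
      (m₂ t * (-d + g * μ (s t) - r₁ * m₁ t - r₂ * m₂ t - α₂) + α₁ * m₁ t) (Ioi t) t)
    (hm₁x : 0 ≤ m₁ x) (hm₂x : 0 ≤ m₂ x) :
    ∀ t ∈ Icc x b, 0 ≤ m₁ t ∧ 0 ≤ m₂ t := by
  obtain ⟨M₁, hM₁⟩ := isCompact_Icc.exists_bound_of_continuousOn hm₁
  obtain ⟨M₂, hM₂⟩ := isCompact_Icc.exists_bound_of_continuousOn hm₂
  have hgrowth : ∀ t ∈ Ico x b, g * μ (s t) - r₁ * m₁ t - r₂ * m₂ t ≤ g + r₁ * M₁ + r₂ * M₂ := by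
    intro t ht
    have h₁ := neg_le_of_abs_le (hM₁ t (Ico_subset_Icc_self ht))
    have h₂ := neg_le_of_abs_le (hM₂ t (Ico_subset_Icc_self ht))
    nlinarith [mul_le_mul_of_nonneg_left (hμs t ht) hg]
  refine nonneg_of_cooperative_deriv (K := g + r₁ * M₁ + r₂ * M₂) hα₂ hα₁
    (fun t ht => ?_) (fun t ht => ?_) hm₁ hm₂ hm₁' hm₂' hm₁x hm₂x
  · nlinarith [hgrowth t ht, mul_nonneg hα (hDφ t ht)]
  · linarith [hgrowth t ht]

theorem random_chemostat_positive_invariance_general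
    (D a sIn c g d r α α₁ α₂ r₁ r₂ : ℝ)
    (hDa : a < D) (hsIn : 0 < sIn)
    (hg : 0 < g) (hd : 0 < d) (hr0 : 0 < r)
    (hα : 0 < α) (hα₁ : 0 ≤ α₁) (hα₂ : 0 ≤ α₂) (hr₁ : 0 < r₁) (hr₂ : 0 < r₂)
    (φ : ℝ → ℝ)
    (hφbdd : ∀ t ∈ Set.Ici (0:ℝ), φ t ∈ Set.Icc (-a) a)
    (μ : ℝ → ℝ) (hμ0 : μ 0 = 0)
    (hμle : ∀ x : ℝ, 0 ≤ x → μ x ≤ 1)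
    (tM : ℝ)
    (s m₁ m₂ : ℝ → ℝ)
    (hsol : ∀ t ∈ (Set.Ico (0:ℝ) tM),
        HasDerivWithinAt s ((D + φ t) * (sIn - α * s t) - c * μ (s t) * (m₁ t + m₂ t) + r * d * m₁ t) (Set.Ico (0:ℝ) tM) t ∧
        HasDerivWithinAt m₁ (m₁ t * (-d - α * (D + φ t) + g * μ (s t) - r₁ * m₁ t - r₂ * m₂ t - α₁) + α₂ * m₂ t) (Set.Ico (0:ℝ) tM) t ∧
        HasDerivWithinAt m₂ (m₂ t * (-d + g * μ (s t) - r₁ * m₁ t - r₂ * m₂ t - α₂) + α₁ * m₁ t) (Set.Ico (0:ℝ) tM) t)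
    (hs₀ : 0 ≤ s 0) (hm₁₀ : 0 ≤ m₁ 0) (hm₂₀ : 0 ≤ m₂ 0) :
    ∀ t ∈ Set.Ico (0:ℝ) tM, 0 ≤ s t ∧ 0 ≤ m₁ t ∧ 0 ≤ m₂ t := by
  have hDφ : ∀ t ∈ Ico 0 tM, 0 < D + φ t := fun t ht => by linarith [(hφbdd t ht.1).1]
  have hcont : ContinuousOn (fun t => (s t, m₁ t, m₂ t)) (Ico 0 tM) := fun t ht =>
    (hsol t ht).1.continuousWithinAt.prodMk
      ((hsol t ht).2.1.continuousWithinAt.prodMk (hsol t ht).2.2.continuousWithinAt)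
  intro T hT
  set S := {t | 0 ≤ s t ∧ 0 ≤ m₁ t ∧ 0 ≤ m₂ t}
  suffices Icc 0 T ⊆ S from this ⟨hT.1, le_rfl⟩
  refine IsClosed.Icc_subset_of_forall_mem_nhdsWithin ?_ ⟨hs₀, hm₁₀, hm₂₀⟩ ?_
  · -- `S` is the preimage of the octant `Ici 0` of `ℝ × ℝ × ℝ` under `(s, m₁, m₂)`
    rw [inter_comm]
    exact (hcont.mono (Icc_subset_Ico_right hT.2)).preimage_isClosed_of_isClosed isClosed_Icc
      (isClosed_Ici (a := (0 : ℝ × ℝ × ℝ)))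
  rintro x ⟨⟨hsx, hm₁x, hm₂x⟩, hx0, hxT⟩
  have hx : x ∈ Ico 0 tM := ⟨hx0, hxT.trans hT.2⟩
  obtain ⟨b, hxb, hb⟩ := mem_nhdsGE_iff_exists_Icc_subset.1 <|
    (chemostat_substrate_eventually_nonneg ((hsol x hx).1.Ioi_of_mem_Ico hx) (hDφ x hx) hsIn
      hr0.le hd.le hμ0 hsx hm₁x).and (Ico_mem_nhdsGE hx.2)
  have hIcc : Icc x b ⊆ Ico 0 tM := fun t ht => Ico_subset_Ico_left hx0 (hb ht).2
  have hIco : Ico x b ⊆ Ico 0 tM := Ico_subset_Icc_self.trans hIcc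
  have hm := chemostat_biomass_nonneg hg.le hd.le hα.le hα₁ hα₂ hr₁.le hr₂.le
    (fun t ht => (hDφ t (hIco ht)).le)
    (fun t ht => hμle _ (hb (Ico_subset_Icc_self ht)).1)
    (fun t ht => (hsol t (hIcc ht)).2.1.continuousWithinAt.mono hIcc)
    (fun t ht => (hsol t (hIcc ht)).2.2.continuousWithinAt.mono hIcc)
    (fun t ht => (hsol t (hIco ht)).2.1.Ioi_of_mem_Ico (hIco ht))
    (fun t ht => (hsol t (hIco ht)).2.2.Ioi_of_mem_Ico (hIco ht)) hm₁x hm₂x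
  exact mem_of_superset (Icc_mem_nhdsGT hxb) fun t ht => ⟨(hb ht).1, hm t ht⟩

/-- The nonnegative octant is positively invariant for the random
chemostat system: any solution on a (maximal) interval `[0, t_M)` starting in `ℝ³₊`
stays in `ℝ³₊`. -/
theorem random_chemostat_positive_invariance
    (D a sIn c g d r α α₁ α₂ r₁ r₂ : ℝ)
    (ha : 0 < a) (hDa : a < D) (hsIn : 0 < sIn) (hc : 0 < c)
    (hg : 0 < g) (hgc : g ≤ c) (hd : 0 < d) (hr0 : 0 < r) (hr1 : r < 1)
    (hα : 0 < α) (hα₁ : 0 ≤ α₁) (hα₂ : 0 ≤ α₂) (hr₁ : 0 < r₁) (hr₂ : 0 < r₂)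
    (φ : ℝ → ℝ) (hφcont : ContinuousOn φ (Set.Ici 0))
    (hφbdd : ∀ t ∈ Set.Ici (0:ℝ), φ t ∈ Set.Icc (-a) a)
    (μ : ℝ → ℝ) (hμC1 : ContDiffOn ℝ 1 μ (Set.Ici 0)) (hμ0 : μ 0 = 0)
    (hμpos : ∀ x : ℝ, 0 < x → 0 < μ x) (hμle : ∀ x : ℝ, 0 ≤ x → μ x ≤ 1)
    (tM : ℝ) (htM : 0 < tM)
    (s m₁ m₂ : ℝ → ℝ)
    (hsol : ∀ t ∈ (Set.Ico (0:ℝ) tM),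
        HasDerivWithinAt s ((D + φ t) * (sIn - α * s t) - c * μ (s t) * (m₁ t + m₂ t) + r * d * m₁ t) (Set.Ico (0:ℝ) tM) t ∧
        HasDerivWithinAt m₁ (m₁ t * (-d - α * (D + φ t) + g * μ (s t) - r₁ * m₁ t - r₂ * m₂ t - α₁) + α₂ * m₂ t) (Set.Ico (0:ℝ) tM) t ∧
        HasDerivWithinAt m₂ (m₂ t * (-d + g * μ (s t) - r₁ * m₁ t - r₂ * m₂ t - α₂) + α₁ * m₁ t) (Set.Ico (0:ℝ) tM) t)
    (hs₀ : 0 ≤ s 0) (hm₁₀ : 0 ≤ m₁ 0) (hm₂₀ : 0 ≤ m₂ 0) :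
    ∀ t ∈ Set.Ico (0:ℝ) tM, 0 ≤ s t ∧ 0 ≤ m₁ t ∧ 0 ≤ m₂ t :=
  random_chemostat_positive_invariance_general D a sIn c g d r α α₁ α₂ r₁ r₂ hDa hsIn hg hd hr0 hα
    hα₁ hα₂ hr₁ hr₂ φ hφbdd μ hμ0 hμle tM s m₁ m₂ hsol hs₀ hm₁₀ hm₂₀
end

section
/- Let (s, m₁, m₂) be a solution of the random chemostat system on [0, t_M) with values in ℝ³₊, and set z(t) := g s(t) + c(m₁(t) + m₂(t)). Then z satisfies the differential inequality z'(t) ≤ g(D + φ(t)) s_in + g r d z(t) for all t ∈ [0, t_M); in particular, by Gronwall's inequality, z(t) ≤ z(0) e^{g r d t} + (D_max s_in/(r d))(e^{g r d t} − 1) for all t ∈ [0, t_M), so the solution does not blow up in finite time. -/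
/-! In `z = g s + c (m₁ + m₂)` the consumption terms `c μ(s) (m₁ + m₂)` cancel, and so do the
switching terms `α₁ m₁`, `α₂ m₂`. On the positive octant every remaining term of `z'` except the
inflow `g (D + φ) s_in` and the recycling `g r d m₁ ≤ c d m₁` is nonpositive, so
`z' ≤ g (D + φ) s_in + g r d z`. Since `D + φ ≤ D_max`, Gronwall's inequality with rate `g r d`
gives the exponential bound. -/

open Set

theorem le_gronwallBound_of_hasDerivWithinAt_Ico {f f' : ℝ → ℝ} {a b K ε : ℝ}
    (hf : ∀ x ∈ Ico a b, HasDerivWithinAt f (f' x) (Ico a b) x)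
    (bound : ∀ x ∈ Ico a b, f' x ≤ K * f x + ε) :
    ∀ x ∈ Ico a b, f x ≤ gronwallBound (f a) K ε (x - a) := by
  intro x hx
  have hsub : Icc a x ⊆ Ico a b := Icc_subset_Ico_right hx.2
  refine le_gronwallBound_of_liminf_deriv_right_le (b := x)
    (fun y hy => (hf y (hsub hy)).continuousWithinAt.mono hsub) (fun y hy r hr => ?_) le_rfl
    (fun y hy => bound y (hsub (Ico_subset_Icc_self hy))) x (right_mem_Icc.2 hx.1)
  have hy : y ∈ Ico a b := hsub (Ico_subset_Icc_self hy)
  refine ((hf y hy).mono_of_mem_nhdsWithin ?_).liminf_right_slope_le hr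
  exact Filter.mem_of_superset (Ico_mem_nhdsGE hy.2) (Ico_subset_Ico_left hy.1)

theorem weighted_mass_rate_le {u sIn c g d r α α₁ α₂ r₁ r₂ q s m₁ m₂ : ℝ}
    (hu : 0 ≤ u) (hc : 0 ≤ c) (hg : 0 ≤ g) (hgc : g ≤ c) (hd : 0 ≤ d) (hr0 : 0 ≤ r)
    (hr1 : r ≤ 1) (hα : 0 ≤ α) (hr₁ : 0 ≤ r₁) (hr₂ : 0 ≤ r₂)
    (hs : 0 ≤ s) (hm₁ : 0 ≤ m₁) (hm₂ : 0 ≤ m₂) :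
    g * (u * (sIn - α * s) - c * q * (m₁ + m₂) + r * d * m₁) +
        c * ((m₁ * (-d - α * u + g * q - r₁ * m₁ - r₂ * m₂ - α₁) + α₂ * m₂) +
          (m₂ * (-d + g * q - r₁ * m₁ - r₂ * m₂ - α₂) + α₁ * m₁)) ≤
      g * u * sIn + g * r * d * (g * s + c * (m₁ + m₂)) := by
  have hgr : g * r ≤ c := (mul_le_of_le_one_right hg hr1).trans hgc
  calc _ = g * u * sIn - (g * u * α * s + (c - g * r) * d * m₁ + c * d * m₂ + c * α * u * m₁
          + c * (r₁ * m₁ + r₂ * m₂) * (m₁ + m₂)) := by ring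
    _ ≤ g * u * sIn := by
      have : 0 ≤ (c - g * r) * d * m₁ := by have := sub_nonneg.2 hgr; positivity
      have : 0 ≤ g * u * α * s + c * d * m₂ + c * α * u * m₁
          + c * (r₁ * m₁ + r₂ * m₂) * (m₁ + m₂) := by positivity
      linarith
    _ ≤ _ := by
      have : 0 ≤ g * s + c * (m₁ + m₂) := by positivity
      linarith [mul_nonneg (by positivity : 0 ≤ g * r * d) this]

theorem random_chemostat_no_blowup_general
    (D a sIn c g d r α α₁ α₂ r₁ r₂ : ℝ)
    (hDa : a < D) (hsIn : 0 < sIn) (hc : 0 < c)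
    (hg : 0 < g) (hgc : g ≤ c) (hd : 0 < d) (hr0 : 0 < r) (hr1 : r < 1)
    (hα : 0 < α) (hr₁ : 0 < r₁) (hr₂ : 0 < r₂)
    (φ : ℝ → ℝ)
    (hφbdd : ∀ t ∈ Set.Ici (0:ℝ), φ t ∈ Set.Icc (-a) a)
    (μ : ℝ → ℝ)
    (tM : ℝ)
    (s m₁ m₂ : ℝ → ℝ)
    (hsol : ∀ t ∈ (Set.Ico (0:ℝ) tM),
        HasDerivWithinAt s ((D + φ t) * (sIn - α * s t) - c * μ (s t) * (m₁ t + m₂ t) + r * d * m₁ t) (Set.Ico (0:ℝ) tM) t ∧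
        HasDerivWithinAt m₁ (m₁ t * (-d - α * (D + φ t) + g * μ (s t) - r₁ * m₁ t - r₂ * m₂ t - α₁) + α₂ * m₂ t) (Set.Ico (0:ℝ) tM) t ∧
        HasDerivWithinAt m₂ (m₂ t * (-d + g * μ (s t) - r₁ * m₁ t - r₂ * m₂ t - α₂) + α₁ * m₁ t) (Set.Ico (0:ℝ) tM) t)
    (hoct : ∀ t ∈ (Set.Ico (0:ℝ) tM), 0 ≤ s t ∧ 0 ≤ m₁ t ∧ 0 ≤ m₂ t) :
    (∀ t ∈ Set.Ico (0:ℝ) tM, ∀ zd : ℝ,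
      HasDerivWithinAt (fun τ => g * s τ + c * (m₁ τ + m₂ τ)) zd (Set.Ico (0:ℝ) tM) t →
      zd ≤ g * (D + φ t) * sIn + g * r * d * (g * s t + c * (m₁ t + m₂ t))) ∧
    (∀ t ∈ Set.Ico (0:ℝ) tM,
      g * s t + c * (m₁ t + m₂ t) ≤
        (g * s 0 + c * (m₁ 0 + m₂ 0)) * Real.exp (g * r * d * t) +
          ((D + a) * sIn / (r * d)) * (Real.exp (g * r * d * t) - 1)) := by
  set z := fun τ => g * s τ + c * (m₁ τ + m₂ τ)
  have hz : ∀ t ∈ Ico 0 tM, HasDerivWithinAt z (derivWithin z (Ico 0 tM) t) (Ico 0 tM) t ∧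
      derivWithin z (Ico 0 tM) t ≤ g * (D + φ t) * sIn + g * r * d * z t := by
    intro t ht
    obtain ⟨hs', hm₁', hm₂'⟩ := hsol t ht
    obtain ⟨hs, hm₁, hm₂⟩ := hoct t ht
    have hz' : HasDerivWithinAt z _ (Ico 0 tM) t :=
      (hs'.const_mul g).add ((hm₁'.add hm₂').const_mul c)
    rw [hz'.derivWithin (uniqueDiffOn_Ico 0 tM t ht)]
    exact ⟨hz', weighted_mass_rate_le (by linarith [(hφbdd t ht.1).1]) hc.le hg.le hgc hd.le hr0.le hr1.le
      hα.le hr₁.le hr₂.le hs hm₁ hm₂⟩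
  refine ⟨fun t ht zd hzd => ?_, fun t ht => ?_⟩
  · rw [(uniqueDiffOn_Ico 0 tM t ht).eq_deriv _ hzd (hz t ht).1]
    exact (hz t ht).2
  · have hK : g * r * d ≠ 0 := by positivity
    have hgron := le_gronwallBound_of_hasDerivWithinAt_Ico (K := g * r * d)
      (ε := g * (D + a) * sIn) (fun t ht => (hz t ht).1) (fun t ht => (hz t ht).2.trans ?_) t ht
    · rw [gronwallBound_of_K_ne_0 hK, sub_zero] at hgron
      convert hgron using 3
      field_simp
    · have : g * (D + φ t) * sIn ≤ g * (D + a) * sIn := by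
        gcongr
        exact (hφbdd t ht.1).2
      linarith

/-- For any nonnegative solution on `[0, t_M)`, the quantity
`z = g·s + c·(m₁ + m₂)` satisfies `z' ≤ g(D + φ(t))·s_in + g·r·d·z`, hence by Gronwall's
inequality `z(t) ≤ z(0)e^{g r d t} + (D_max s_in/(r d))(e^{g r d t} − 1)`; in particular the
solution does not blow up in finite time. -/
theorem random_chemostat_no_blowup
    (D a sIn c g d r α α₁ α₂ r₁ r₂ : ℝ)
    (ha : 0 < a) (hDa : a < D) (hsIn : 0 < sIn) (hc : 0 < c)
    (hg : 0 < g) (hgc : g ≤ c) (hd : 0 < d) (hr0 : 0 < r) (hr1 : r < 1)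
    (hα : 0 < α) (hα₁ : 0 ≤ α₁) (hα₂ : 0 ≤ α₂) (hr₁ : 0 < r₁) (hr₂ : 0 < r₂)
    (φ : ℝ → ℝ) (hφcont : ContinuousOn φ (Set.Ici 0))
    (hφbdd : ∀ t ∈ Set.Ici (0:ℝ), φ t ∈ Set.Icc (-a) a)
    (μ : ℝ → ℝ) (hμC1 : ContDiffOn ℝ 1 μ (Set.Ici 0)) (hμ0 : μ 0 = 0)
    (hμpos : ∀ x : ℝ, 0 < x → 0 < μ x) (hμle : ∀ x : ℝ, 0 ≤ x → μ x ≤ 1)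
    (tM : ℝ) (htM : 0 < tM)
    (s m₁ m₂ : ℝ → ℝ)
    (hsol : ∀ t ∈ (Set.Ico (0:ℝ) tM),
        HasDerivWithinAt s ((D + φ t) * (sIn - α * s t) - c * μ (s t) * (m₁ t + m₂ t) + r * d * m₁ t) (Set.Ico (0:ℝ) tM) t ∧
        HasDerivWithinAt m₁ (m₁ t * (-d - α * (D + φ t) + g * μ (s t) - r₁ * m₁ t - r₂ * m₂ t - α₁) + α₂ * m₂ t) (Set.Ico (0:ℝ) tM) t ∧
        HasDerivWithinAt m₂ (m₂ t * (-d + g * μ (s t) - r₁ * m₁ t - r₂ * m₂ t - α₂) + α₁ * m₁ t) (Set.Ico (0:ℝ) tM) t)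
    (hoct : ∀ t ∈ (Set.Ico (0:ℝ) tM), 0 ≤ s t ∧ 0 ≤ m₁ t ∧ 0 ≤ m₂ t) :
    (∀ t ∈ Set.Ico (0:ℝ) tM, ∀ zd : ℝ,
      HasDerivWithinAt (fun τ => g * s τ + c * (m₁ τ + m₂ τ)) zd (Set.Ico (0:ℝ) tM) t →
      zd ≤ g * (D + φ t) * sIn + g * r * d * (g * s t + c * (m₁ t + m₂ t))) ∧
    (∀ t ∈ Set.Ico (0:ℝ) tM,
      g * s t + c * (m₁ t + m₂ t) ≤
        (g * s 0 + c * (m₁ 0 + m₂ 0)) * Real.exp (g * r * d * t) +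
          ((D + a) * sIn / (r * d)) * (Real.exp (g * r * d * t) - 1)) :=
  random_chemostat_no_blowup_general D a sIn c g d r α α₁ α₂ r₁ r₂ hDa hsIn hc hg hgc hd hr0 hr1 hα
    hr₁ hr₂ φ hφbdd μ tM s m₁ m₂ hsol hoct
end

section
/- Assume ϑ := min{α D_min, d + α D_min − g c⁻¹ r d, d} > 0. Let (s, m₁, m₂) be any solution of the random chemostat system on [0, ∞) with values in ℝ³₊ and set z(t) := g s(t) + c(m₁(t) + m₂(t)). Then for all t ≥ 0, z(t) ≤ z(0) e^{−ϑ t} + (g D_max s_in / ϑ)(1 − e^{−ϑ t}). -/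
open Set Real

/-!
In `z' = g s' + c (m₁' + m₂')` the consumption terms `∓ g c μ(s) (m₁ + m₂)` and the switching
rates `α₁`, `α₂` cancel, and on the nonnegative octant the remaining terms satisfy
`z' ≤ -ϑ z + g D_max s_in`. The comparison principle (Grönwall) for this linear differential
inequality gives the bound.
-/

theorem le_gronwallBound_of_deriv_right_le {f f' : ℝ → ℝ} {δ K ε a b : ℝ}
    (hf : ContinuousOn f (Icc a b)) (hf' : ∀ x ∈ Ico a b, HasDerivWithinAt f (f' x) (Ici x) x)
    (ha : f a ≤ δ) (bound : ∀ x ∈ Ico a b, f' x ≤ K * f x + ε) :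
    ∀ x ∈ Icc a b, f x ≤ gronwallBound δ K ε (x - a) :=
  le_gronwallBound_of_liminf_deriv_right_le hf
    (fun x hx _ hr => (hf' x hx).liminf_right_slope_le hr) ha bound

theorem le_exp_decay_of_hasDerivWithinAt_Ici {f f' : ℝ → ℝ} {ϑ K t₀ : ℝ} (hϑ : ϑ ≠ 0)
    (hf : ∀ x ∈ Ici t₀, HasDerivWithinAt f (f' x) (Ici t₀) x)
    (bound : ∀ x ∈ Ici t₀, f' x ≤ -ϑ * f x + K) :
    ∀ t ∈ Ici t₀, f t ≤ f t₀ * exp (-ϑ * (t - t₀)) + K / ϑ * (1 - exp (-ϑ * (t - t₀))) := by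
  intro t ht
  have hcont : ContinuousOn f (Icc t₀ t) := fun x hx =>
    (hf x hx.1).continuousWithinAt.mono Icc_subset_Ici_self
  have hf' : ∀ x ∈ Ico t₀ t, HasDerivWithinAt f (f' x) (Ici x) x := fun x hx =>
    (hf x hx.1).mono (Ici_subset_Ici.2 hx.1)
  have := le_gronwallBound_of_deriv_right_le hcont hf' le_rfl (fun x hx => bound x hx.1) t
    ⟨ht, le_rfl⟩
  rw [gronwallBound_of_K_ne_0 (neg_ne_zero.2 hϑ)] at this
  linarith [show K / -ϑ * (exp (-ϑ * (t - t₀)) - 1) = K / ϑ * (1 - exp (-ϑ * (t - t₀))) by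
    rw [div_neg]; ring]

theorem chemostat_mass_deriv_le {D a sIn c g d r α α₁ α₂ r₁ r₂ ϑ φ u s m₁ m₂ : ℝ}
    (hsIn : 0 ≤ sIn) (hc : 0 < c) (hg : 0 ≤ g) (hα : 0 ≤ α) (hr₁ : 0 ≤ r₁) (hr₂ : 0 ≤ r₂)
    (hφ : φ ∈ Icc (-a) a)
    (hϑs : ϑ ≤ α * (D - a)) (hϑm₁ : ϑ ≤ d + α * (D - a) - g * c⁻¹ * r * d) (hϑm₂ : ϑ ≤ d)
    (hs : 0 ≤ s) (hm₁ : 0 ≤ m₁) (hm₂ : 0 ≤ m₂) :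
    g * ((D + φ) * (sIn - α * s) - c * u * (m₁ + m₂) + r * d * m₁) +
        c * ((m₁ * (-d - α * (D + φ) + g * u - r₁ * m₁ - r₂ * m₂ - α₁) + α₂ * m₂) +
          (m₂ * (-d + g * u - r₁ * m₁ - r₂ * m₂ - α₂) + α₁ * m₁)) ≤
      -ϑ * (g * s + c * (m₁ + m₂)) + g * (D + a) * sIn := by
  obtain ⟨haφ, hφa⟩ := hφ
  have hϑm₁' : c * ϑ ≤ c * (d + α * (D - a)) - g * r * d := by
    have hcancel : c * (g * c⁻¹ * r * d) = g * r * d := by field_simp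
    linarith [mul_le_mul_of_nonneg_left hϑm₁ hc.le]
  have inflow : g * ((D + φ) * sIn) ≤ g * (D + a) * sIn := by nlinarith [mul_nonneg hg hsIn]
  have washout_s : ϑ * (g * s) ≤ g * (α * (D + φ) * s) := by
    nlinarith [mul_nonneg (sub_nonneg.2 hϑs) (mul_nonneg hg hs),
      mul_nonneg (mul_nonneg hα (by linarith : (0:ℝ) ≤ φ + a)) (mul_nonneg hg hs)]
  have loss_m₁ : ϑ * (c * m₁) ≤ (c * (d + α * (D + φ)) - g * r * d) * m₁ := by
    nlinarith [mul_nonneg (sub_nonneg.2 hϑm₁') hm₁,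
      mul_nonneg (mul_nonneg (mul_nonneg hc.le hα) (by linarith : (0:ℝ) ≤ φ + a)) hm₁]
  have loss_m₂ : ϑ * (c * m₂) ≤ c * d * m₂ := by
    nlinarith [mul_nonneg (sub_nonneg.2 hϑm₂) (mul_nonneg hc.le hm₂)]
  have crowding : 0 ≤ c * ((m₁ + m₂) * (r₁ * m₁ + r₂ * m₂)) := by positivity
  linarith

theorem random_chemostat_absorbing_estimate_general
    (D a sIn c g d r α α₁ α₂ r₁ r₂ : ℝ)
    (hsIn : 0 < sIn) (hc : 0 < c) (hg : 0 < g) (hα : 0 < α) (hr₁ : 0 < r₁) (hr₂ : 0 < r₂)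
    (φ : ℝ → ℝ) (hφbdd : ∀ t ∈ Set.Ici (0:ℝ), φ t ∈ Set.Icc (-a) a)
    (μ : ℝ → ℝ)
    (ϑ : ℝ) (hϑdef : ϑ = min (α * (D - a)) (min (d + α * (D - a) - g * c⁻¹ * r * d) d))
    (hϑpos : 0 < ϑ)
    (s m₁ m₂ : ℝ → ℝ)
    (hsol : ∀ t ∈ (Set.Ici (0:ℝ)),
        HasDerivWithinAt s ((D + φ t) * (sIn - α * s t) - c * μ (s t) * (m₁ t + m₂ t) + r * d * m₁ t) (Set.Ici (0:ℝ)) t ∧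
        HasDerivWithinAt m₁ (m₁ t * (-d - α * (D + φ t) + g * μ (s t) - r₁ * m₁ t - r₂ * m₂ t - α₁) + α₂ * m₂ t) (Set.Ici (0:ℝ)) t ∧
        HasDerivWithinAt m₂ (m₂ t * (-d + g * μ (s t) - r₁ * m₁ t - r₂ * m₂ t - α₂) + α₁ * m₁ t) (Set.Ici (0:ℝ)) t)
    (hoct : ∀ t ∈ (Set.Ici (0:ℝ)), 0 ≤ s t ∧ 0 ≤ m₁ t ∧ 0 ≤ m₂ t) :
    ∀ t ∈ Set.Ici (0:ℝ),
      g * s t + c * (m₁ t + m₂ t) ≤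
        (g * s 0 + c * (m₁ 0 + m₂ 0)) * Real.exp (-ϑ * t) +
          (g * (D + a) * sIn / ϑ) * (1 - Real.exp (-ϑ * t)) := by
  obtain ⟨hϑs, hϑm₁, hϑm₂⟩ : ϑ ≤ α * (D - a) ∧ ϑ ≤ d + α * (D - a) - g * c⁻¹ * r * d ∧ ϑ ≤ d := by
    simpa only [le_min_iff] using hϑdef.le
  have hmass : ∀ x ∈ Ici (0:ℝ), HasDerivWithinAt (fun u => g * s u + c * (m₁ u + m₂ u))
      (g * ((D + φ x) * (sIn - α * s x) - c * μ (s x) * (m₁ x + m₂ x) + r * d * m₁ x) +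
        c * ((m₁ x * (-d - α * (D + φ x) + g * μ (s x) - r₁ * m₁ x - r₂ * m₂ x - α₁) +
          α₂ * m₂ x) + (m₂ x * (-d + g * μ (s x) - r₁ * m₁ x - r₂ * m₂ x - α₂) + α₁ * m₁ x)))
      (Ici 0) x := fun x hx =>
    let ⟨hs', hm₁', hm₂'⟩ := hsol x hx
    (hs'.const_mul g).add ((hm₁'.add hm₂').const_mul c)
  intro t ht
  simpa only [sub_zero] using le_exp_decay_of_hasDerivWithinAt_Ici hϑpos.ne' hmass
    (fun x hx => chemostat_mass_deriv_le hsIn.le hc hg.le hα.le hr₁.le hr₂.le (hφbdd x hx)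
      hϑs hϑm₁ hϑm₂ (hoct x hx).1 (hoct x hx).2.1 (hoct x hx).2.2) t ht

/-- If `ϑ := min{α D_min, d + α D_min − g c⁻¹ r d, d} > 0`, then every
nonnegative global solution satisfies
`z(t) ≤ z(0)e^{−ϑ t} + (g D_max s_in/ϑ)(1 − e^{−ϑ t})` where `z = g·s + c·(m₁ + m₂)`. -/
theorem random_chemostat_absorbing_estimate
    (D a sIn c g d r α α₁ α₂ r₁ r₂ : ℝ)
    (ha : 0 < a) (hDa : a < D) (hsIn : 0 < sIn) (hc : 0 < c)
    (hg : 0 < g) (hgc : g ≤ c) (hd : 0 < d) (hr0 : 0 < r) (hr1 : r < 1)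
    (hα : 0 < α) (hα₁ : 0 ≤ α₁) (hα₂ : 0 ≤ α₂) (hr₁ : 0 < r₁) (hr₂ : 0 < r₂)
    (φ : ℝ → ℝ) (hφcont : ContinuousOn φ (Set.Ici 0))
    (hφbdd : ∀ t ∈ Set.Ici (0:ℝ), φ t ∈ Set.Icc (-a) a)
    (μ : ℝ → ℝ) (hμC1 : ContDiffOn ℝ 1 μ (Set.Ici 0)) (hμ0 : μ 0 = 0)
    (hμpos : ∀ x : ℝ, 0 < x → 0 < μ x) (hμle : ∀ x : ℝ, 0 ≤ x → μ x ≤ 1)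
    (ϑ : ℝ) (hϑdef : ϑ = min (α * (D - a)) (min (d + α * (D - a) - g * c⁻¹ * r * d) d))
    (hϑpos : 0 < ϑ)
    (s m₁ m₂ : ℝ → ℝ)
    (hsol : ∀ t ∈ (Set.Ici (0:ℝ)),
        HasDerivWithinAt s ((D + φ t) * (sIn - α * s t) - c * μ (s t) * (m₁ t + m₂ t) + r * d * m₁ t) (Set.Ici (0:ℝ)) t ∧
        HasDerivWithinAt m₁ (m₁ t * (-d - α * (D + φ t) + g * μ (s t) - r₁ * m₁ t - r₂ * m₂ t - α₁) + α₂ * m₂ t) (Set.Ici (0:ℝ)) t ∧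
        HasDerivWithinAt m₂ (m₂ t * (-d + g * μ (s t) - r₁ * m₁ t - r₂ * m₂ t - α₂) + α₁ * m₁ t) (Set.Ici (0:ℝ)) t)
    (hoct : ∀ t ∈ (Set.Ici (0:ℝ)), 0 ≤ s t ∧ 0 ≤ m₁ t ∧ 0 ≤ m₂ t) :
    ∀ t ∈ Set.Ici (0:ℝ),
      g * s t + c * (m₁ t + m₂ t) ≤
        (g * s 0 + c * (m₁ 0 + m₂ 0)) * Real.exp (-ϑ * t) +
          (g * (D + a) * sIn / ϑ) * (1 - Real.exp (-ϑ * t)) :=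
  random_chemostat_absorbing_estimate_general D a sIn c g d r α α₁ α₂ r₁ r₂ hsIn hc hg hα hr₁ hr₂ φ
    hφbdd μ ϑ hϑdef hϑpos s m₁ m₂ hsol hoct
end

section
/- Assume ϑ := min{α D_min, d + α D_min − g c⁻¹ r d, d} > 0. Then for every solution (s, m₁, m₂) of the random chemostat system on [0, ∞) with values in ℝ³₊, one has limsup_{t→∞} (g s(t) + c(m₁(t) + m₂(t))) ≤ g D_max s_in / ϑ; that is, the deterministic compact set B₀ := {(s, m₁, m₂) ∈ ℝ³₊ : g s + c(m₁ + m₂) ≤ g D_max s_in/ϑ} attracts all solutions. -/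
/-!
With `K := g D_max s_in`, the weighted total mass `V := g s + c (m₁ + m₂)` satisfies
`V' + ϑ V ≤ K` along every solution in the positive octant: in `g s' + c (m₁' + m₂')` the
consumption terms `μ(s)` and the switching terms `α₁, α₂` cancel, the crowding terms are
nonpositive, and each remaining linear term is dominated by the corresponding entry of the
minimum defining `ϑ`. Grönwall's inequality then gives
`V t ≤ K / ϑ + (V 0 - K / ϑ) e^{-ϑ t}`, whose limit is `K / ϑ`.
-/

open Set Filter Topology Real

theorem le_gronwallBound_of_hasDerivWithinAt_Ici {f f' : ℝ → ℝ} {a K ε : ℝ}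
    (hf : ∀ x ∈ Ici a, HasDerivWithinAt f (f' x) (Ici a) x)
    (bound : ∀ x ∈ Ici a, f' x ≤ K * f x + ε) :
    ∀ x ∈ Ici a, f x ≤ gronwallBound (f a) K ε (x - a) := fun x hx =>
  le_gronwallBound_of_liminf_deriv_right_le (b := x)
    (fun y hy => (hf y hy.1).continuousWithinAt.mono Icc_subset_Ici_self)
    (fun y hy _ hr => ((hf y hy.1).mono (Ici_subset_Ici.2 hy.1)).liminf_right_slope_le hr)
    le_rfl (fun y hy => bound y hy.1) x ⟨hx, le_rfl⟩

theorem tendsto_gronwallBound_atTop {δ K ε : ℝ} (hK : K < 0) :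
    Tendsto (gronwallBound δ K ε) atTop (𝓝 (-(ε / K))) := by
  have hexp : Tendsto (fun x => exp (K * x)) atTop (𝓝 0) :=
    tendsto_exp_atBot.comp (tendsto_id.const_mul_atTop_of_neg hK)
  rw [gronwallBound_of_K_ne_0 hK.ne]
  simpa using (hexp.const_mul δ).add ((hexp.sub_const 1).const_mul (ε / K))

theorem limsup_le_of_eventually_le_of_tendsto {ι : Type*} {f g : ι → ℝ} {l : Filter ι} [l.NeBot]
    {L : ℝ}
    (hfg : f ≤ᶠ[l] g) (hg : Tendsto g l (𝓝 L)) (hf : IsCoboundedUnder (· ≤ ·) l f) :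
    limsup f l ≤ L :=
  hg.limsup_eq ▸ limsup_le_limsup hfg hf hg.isBoundedUnder_le

theorem limsup_le_of_hasDerivWithinAt_add_mul_le {f f' : ℝ → ℝ} {a ϑ K : ℝ} (hϑ : 0 < ϑ)
    (hf : ∀ x ∈ Ici a, HasDerivWithinAt f (f' x) (Ici a) x)
    (bound : ∀ x ∈ Ici a, f' x + ϑ * f x ≤ K)
    (hcobdd : IsCoboundedUnder (· ≤ ·) atTop f) :
    limsup f atTop ≤ K / ϑ := by
  have hgronwall := le_gronwallBound_of_hasDerivWithinAt_Ici (K := -ϑ) (ε := K) hf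
    fun x hx => by linarith [bound x hx]
  have hshift : Tendsto (fun x => x - a) atTop atTop :=
    tendsto_atTop_add_const_right _ (-a) tendsto_id
  have hlim := (tendsto_gronwallBound_atTop (δ := f a) (ε := K) (neg_lt_zero.2 hϑ)).comp hshift
  rw [div_neg, neg_neg] at hlim
  exact limsup_le_of_eventually_le_of_tendsto ((eventually_ge_atTop a).mono hgronwall) hlim hcobdd

theorem chemostat_lyapunov_deriv_add_le {D a sIn c g d r α α₁ α₂ r₁ r₂ ϑ φ s m₁ m₂ μ : ℝ}
    (hc : 0 < c) (hg : 0 ≤ g) (hsIn : 0 ≤ sIn) (hα : 0 ≤ α) (hr₁ : 0 ≤ r₁) (hr₂ : 0 ≤ r₂)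
    (hϑ₁ : ϑ ≤ α * (D - a)) (hϑ₂ : ϑ ≤ d + α * (D - a) - g * c⁻¹ * r * d) (hϑ₃ : ϑ ≤ d)
    (hφ : φ ∈ Icc (-a) a) (hs : 0 ≤ s) (hm₁ : 0 ≤ m₁) (hm₂ : 0 ≤ m₂) :
    g * ((D + φ) * (sIn - α * s) - c * μ * (m₁ + m₂) + r * d * m₁)
      + c * ((m₁ * (-d - α * (D + φ) + g * μ - r₁ * m₁ - r₂ * m₂ - α₁) + α₂ * m₂)
        + (m₂ * (-d + g * μ - r₁ * m₁ - r₂ * m₂ - α₂) + α₁ * m₁))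
      + ϑ * (g * s + c * (m₁ + m₂)) ≤ g * (D + a) * sIn := by
  obtain ⟨hφ_ge, hφ_le⟩ := hφ
  have hcϑ : c * ϑ ≤ c * d + c * α * (D - a) - g * r * d := by
    have h := mul_le_mul_of_nonneg_left hϑ₂ hc.le
    rwa [show c * (d + α * (D - a) - g * c⁻¹ * r * d) = c * d + c * α * (D - a) - g * r * d by
      field_simp] at h
  have hαφ : α * (D - a) ≤ α * (D + φ) := mul_le_mul_of_nonneg_left (by linarith) hα
  have h_inflow : 0 ≤ g * sIn * (a - φ) := mul_nonneg (mul_nonneg hg hsIn) (by linarith)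
  have h_substrate : 0 ≤ g * s * (α * (D + φ) - ϑ) :=
    mul_nonneg (mul_nonneg hg hs) (by linarith)
  have h_mass₁ : 0 ≤ m₁ * (c * d + c * α * (D + φ) - g * r * d - c * ϑ) :=
    mul_nonneg hm₁ (by linarith [mul_le_mul_of_nonneg_left hαφ hc.le])
  have h_mass₂ : 0 ≤ c * m₂ * (d - ϑ) := mul_nonneg (mul_nonneg hc.le hm₂) (by linarith)
  have h_crowding : 0 ≤ c * (r₁ * m₁ ^ 2 + (r₁ + r₂) * m₁ * m₂ + r₂ * m₂ ^ 2) := by positivity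
  linear_combination h_inflow + h_substrate + h_mass₁ + h_mass₂ + h_crowding

theorem random_chemostat_attracting_set_general
    (D a sIn c g d r α α₁ α₂ r₁ r₂ : ℝ)
    (hsIn : 0 < sIn) (hc : 0 < c)
    (hg : 0 < g) (hα : 0 < α) (hr₁ : 0 < r₁) (hr₂ : 0 < r₂)
    (φ : ℝ → ℝ)
    (hφbdd : ∀ t ∈ Set.Ici (0:ℝ), φ t ∈ Set.Icc (-a) a)
    (μ : ℝ → ℝ)
    (ϑ : ℝ) (hϑdef : ϑ = min (α * (D - a)) (min (d + α * (D - a) - g * c⁻¹ * r * d) d))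
    (hϑpos : 0 < ϑ)
    (s m₁ m₂ : ℝ → ℝ)
    (hsol : ∀ t ∈ (Set.Ici (0:ℝ)),
        HasDerivWithinAt s ((D + φ t) * (sIn - α * s t) - c * μ (s t) * (m₁ t + m₂ t) + r * d * m₁ t) (Set.Ici (0:ℝ)) t ∧
        HasDerivWithinAt m₁ (m₁ t * (-d - α * (D + φ t) + g * μ (s t) - r₁ * m₁ t - r₂ * m₂ t - α₁) + α₂ * m₂ t) (Set.Ici (0:ℝ)) t ∧
        HasDerivWithinAt m₂ (m₂ t * (-d + g * μ (s t) - r₁ * m₁ t - r₂ * m₂ t - α₂) + α₁ * m₁ t) (Set.Ici (0:ℝ)) t)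
    (hoct : ∀ t ∈ (Set.Ici (0:ℝ)), 0 ≤ s t ∧ 0 ≤ m₁ t ∧ 0 ≤ m₂ t) :
    Filter.limsup (fun t => g * s t + c * (m₁ t + m₂ t)) Filter.atTop ≤
      g * (D + a) * sIn / ϑ := by
  obtain ⟨hϑ₁, hϑ₂, hϑ₃⟩ : ϑ ≤ α * (D - a) ∧ ϑ ≤ d + α * (D - a) - g * c⁻¹ * r * d ∧ ϑ ≤ d := by
    simpa only [le_min_iff] using hϑdef.le
  have hV : ∀ t ∈ Ici (0 : ℝ),
      HasDerivWithinAt (fun t => g * s t + c * (m₁ t + m₂ t)) _ (Ici 0) t := fun t ht =>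
    have ⟨hs, hm₁, hm₂⟩ := hsol t ht
    (hs.const_mul g).add ((hm₁.add hm₂).const_mul c)
  refine limsup_le_of_hasDerivWithinAt_add_mul_le hϑpos hV (fun t ht => ?_) ?_
  · obtain ⟨hs, hm₁, hm₂⟩ := hoct t ht
    exact chemostat_lyapunov_deriv_add_le hc hg.le hsIn.le hα.le hr₁.le hr₂.le hϑ₁ hϑ₂ hϑ₃
      (hφbdd t ht) hs hm₁ hm₂
  · refine isCoboundedUnder_le_of_eventually_le atTop (x := 0) ?_
    filter_upwards [eventually_ge_atTop 0] with t ht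
    obtain ⟨hs, hm₁, hm₂⟩ := hoct t ht
    positivity

/-- If `ϑ > 0`, every nonnegative global solution satisfies
`limsup_{t→∞} (g s(t) + c(m₁(t)+m₂(t))) ≤ g D_max s_in/ϑ`; i.e. the deterministic compact
set `B₀` attracts all solutions. -/
theorem random_chemostat_attracting_set
    (D a sIn c g d r α α₁ α₂ r₁ r₂ : ℝ)
    (ha : 0 < a) (hDa : a < D) (hsIn : 0 < sIn) (hc : 0 < c)
    (hg : 0 < g) (hgc : g ≤ c) (hd : 0 < d) (hr0 : 0 < r) (hr1 : r < 1)
    (hα : 0 < α) (hα₁ : 0 ≤ α₁) (hα₂ : 0 ≤ α₂) (hr₁ : 0 < r₁) (hr₂ : 0 < r₂)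
    (φ : ℝ → ℝ) (hφcont : ContinuousOn φ (Set.Ici 0))
    (hφbdd : ∀ t ∈ Set.Ici (0:ℝ), φ t ∈ Set.Icc (-a) a)
    (μ : ℝ → ℝ) (hμC1 : ContDiffOn ℝ 1 μ (Set.Ici 0)) (hμ0 : μ 0 = 0)
    (hμpos : ∀ x : ℝ, 0 < x → 0 < μ x) (hμle : ∀ x : ℝ, 0 ≤ x → μ x ≤ 1)
    (ϑ : ℝ) (hϑdef : ϑ = min (α * (D - a)) (min (d + α * (D - a) - g * c⁻¹ * r * d) d))
    (hϑpos : 0 < ϑ)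
    (s m₁ m₂ : ℝ → ℝ)
    (hsol : ∀ t ∈ (Set.Ici (0:ℝ)),
        HasDerivWithinAt s ((D + φ t) * (sIn - α * s t) - c * μ (s t) * (m₁ t + m₂ t) + r * d * m₁ t) (Set.Ici (0:ℝ)) t ∧
        HasDerivWithinAt m₁ (m₁ t * (-d - α * (D + φ t) + g * μ (s t) - r₁ * m₁ t - r₂ * m₂ t - α₁) + α₂ * m₂ t) (Set.Ici (0:ℝ)) t ∧
        HasDerivWithinAt m₂ (m₂ t * (-d + g * μ (s t) - r₁ * m₁ t - r₂ * m₂ t - α₂) + α₁ * m₁ t) (Set.Ici (0:ℝ)) t)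
    (hoct : ∀ t ∈ (Set.Ici (0:ℝ)), 0 ≤ s t ∧ 0 ≤ m₁ t ∧ 0 ≤ m₂ t) :
    Filter.limsup (fun t => g * s t + c * (m₁ t + m₂ t)) Filter.atTop ≤
      g * (D + a) * sIn / ϑ :=
  random_chemostat_attracting_set_general D a sIn c g d r α α₁ α₂ r₁ r₂ hsIn hc hg hα hr₁ hr₂ φ
    hφbdd μ ϑ hϑdef hϑpos s m₁ m₂ hsol hoct
end

section
/- Let (s, m₁, m₂) be a solution of the random chemostat system on an interval J with m₁(t) > 0 and m₂(t) > 0 for all t ∈ J. Then the proportion p(t) := m₁(t)/(m₁(t)+m₂(t)) is differentiable on J and satisfies the Riccati equation p'(t) = α(D + φ(t)) p(t)² − (α(D + φ(t)) + α₁ + α₂) p(t) + α₂. -/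
/-! The growth rate shared by both phenotypes (death, consumption and crowding) cancels in
`p = m₁ / (m₁ + m₂)`; only the washout `α (D + φ)` that hits `m₁` alone and the switching rates
`α₁, α₂` survive, and they give a Riccati equation. -/

theorem HasDerivWithinAt.proportion_riccati {m₁ m₂ : ℝ → ℝ} {J : Set ℝ} {t G k α₁ α₂ : ℝ}
    (h₁ : HasDerivWithinAt m₁ (m₁ t * (G - k - α₁) + α₂ * m₂ t) J t)
    (h₂ : HasDerivWithinAt m₂ (m₂ t * (G - α₂) + α₁ * m₁ t) J t)
    (hne : m₁ t + m₂ t ≠ 0) :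
    HasDerivWithinAt (fun τ => m₁ τ / (m₁ τ + m₂ τ))
      (k * (m₁ t / (m₁ t + m₂ t)) ^ 2 - (k + α₁ + α₂) * (m₁ t / (m₁ t + m₂ t)) + α₂) J t := by
  refine (h₁.div (h₁.add h₂) hne).congr_deriv ?_
  simp only [Pi.add_apply]
  field_simp
  ring

theorem random_chemostat_proportion_riccati_general
    (D sIn c g d r α α₁ α₂ r₁ r₂ : ℝ)
    (φ : ℝ → ℝ)
    (μ : ℝ → ℝ)
    (J : Set ℝ)
    (s m₁ m₂ : ℝ → ℝ)
    (hsol : ∀ t ∈ J,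
        HasDerivWithinAt s ((D + φ t) * (sIn - α * s t) - c * μ (s t) * (m₁ t + m₂ t) + r * d * m₁ t) J t ∧
        HasDerivWithinAt m₁ (m₁ t * (-d - α * (D + φ t) + g * μ (s t) - r₁ * m₁ t - r₂ * m₂ t - α₁) + α₂ * m₂ t) J t ∧
        HasDerivWithinAt m₂ (m₂ t * (-d + g * μ (s t) - r₁ * m₁ t - r₂ * m₂ t - α₂) + α₁ * m₁ t) J t)
    (hm : ∀ t ∈ J, 0 < m₁ t ∧ 0 < m₂ t) :
    ∀ t ∈ J,
      HasDerivWithinAt (fun τ => m₁ τ / (m₁ τ + m₂ τ))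
        (α * (D + φ t) * (m₁ t / (m₁ t + m₂ t)) ^ 2 -
          (α * (D + φ t) + α₁ + α₂) * (m₁ t / (m₁ t + m₂ t)) + α₂) J t := by
  intro t ht
  obtain ⟨-, h₁, h₂⟩ := hsol t ht
  obtain ⟨hm₁, hm₂⟩ := hm t ht
  set G := -d + g * μ (s t) - r₁ * m₁ t - r₂ * m₂ t
  exact HasDerivWithinAt.proportion_riccati (G := G) (h₁.congr_deriv (by ring)) h₂
    (by positivity)

/-- Along any solution with `m₁, m₂ > 0` on an interval `J ⊆ [0,∞)`, the
proportion `p = m₁/(m₁+m₂)` is differentiable and satisfies the Riccati equation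
`p' = α(D+φ(t))p² − (α(D+φ(t)) + α₁ + α₂)p + α₂`. -/
theorem random_chemostat_proportion_riccati
    (D a sIn c g d r α α₁ α₂ r₁ r₂ : ℝ)
    (ha : 0 < a) (hDa : a < D) (hsIn : 0 < sIn) (hc : 0 < c)
    (hg : 0 < g) (hgc : g ≤ c) (hd : 0 < d) (hr0 : 0 < r) (hr1 : r < 1)
    (hα : 0 < α) (hα₁ : 0 ≤ α₁) (hα₂ : 0 ≤ α₂) (hr₁ : 0 < r₁) (hr₂ : 0 < r₂)
    (φ : ℝ → ℝ) (hφcont : ContinuousOn φ (Set.Ici 0))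
    (hφbdd : ∀ t ∈ Set.Ici (0:ℝ), φ t ∈ Set.Icc (-a) a)
    (μ : ℝ → ℝ) (hμC1 : ContDiffOn ℝ 1 μ (Set.Ici 0)) (hμ0 : μ 0 = 0)
    (hμpos : ∀ x : ℝ, 0 < x → 0 < μ x) (hμle : ∀ x : ℝ, 0 ≤ x → μ x ≤ 1)
    (J : Set ℝ) (hJ : J.OrdConnected) (hJsub : J ⊆ Set.Ici 0)
    (s m₁ m₂ : ℝ → ℝ)
    (hsol : ∀ t ∈ J,
        HasDerivWithinAt s ((D + φ t) * (sIn - α * s t) - c * μ (s t) * (m₁ t + m₂ t) + r * d * m₁ t) J t ∧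
        HasDerivWithinAt m₁ (m₁ t * (-d - α * (D + φ t) + g * μ (s t) - r₁ * m₁ t - r₂ * m₂ t - α₁) + α₂ * m₂ t) J t ∧
        HasDerivWithinAt m₂ (m₂ t * (-d + g * μ (s t) - r₁ * m₁ t - r₂ * m₂ t - α₂) + α₁ * m₁ t) J t)
    (hm : ∀ t ∈ J, 0 < m₁ t ∧ 0 < m₂ t) :
    ∀ t ∈ J,
      HasDerivWithinAt (fun τ => m₁ τ / (m₁ τ + m₂ τ))
        (α * (D + φ t) * (m₁ t / (m₁ t + m₂ t)) ^ 2 -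
          (α * (D + φ t) + α₁ + α₂) * (m₁ t / (m₁ t + m₂ t)) + α₂) J t :=
  random_chemostat_proportion_riccati_general D sIn c g d r α α₁ α₂ r₁ r₂ φ μ J s m₁ m₂ hsol hm
end

section
/- Assume α₁ + α₂ > 0 and let p : [0, ∞) → ℝ be a solution of the Riccati equation p'(t) = α(D + φ(t)) p(t)² − (α(D + φ(t)) + α₁ + α₂) p(t) + α₂ with p(0) ∈ [0, 1]. Then p(t) ∈ [0, 1] for all t ≥ 0 and, moreover, p(t) ≤ p(0) e^{−(α₁+α₂)t} + (α₂/(α₁+α₂))(1 − e^{−(α₁+α₂)t}) for all t ≥ 0; in particular limsup_{t→∞} p(t) ≤ α₂/(α₁+α₂). -/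
/-!
Everything follows from one barrier principle: if `u a ≥ 0` and, on each bounded interval, the
right derivative satisfies `u' ≥ K u` wherever `u < 0`, then `u ≥ 0`; indeed `-u` can never touch
the fence `ε e^{(K+1)(t-a)}`. Apply it to `p` (the right-hand side is positive where `p < 0`), to
`1 - p` (where `p > 1` the right-hand side is at most `K (p - 1)`, with `K` a bound for
`α (D + φ) p` on the interval), and, once `0 ≤ p ≤ 1`, to `q - p`, where `q` solves the linear
equation `q' = α₂ - (α₁ + α₂) q`, which dominates the Riccati one because
`α (D + φ) p (1 - p) ≥ 0`. The `limsup` bound follows since `q → α₂ / (α₁ + α₂)`.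
-/

open Set Filter Topology Real

theorem nonneg_of_deriv_right_ge_mul_of_neg {u u' : ℝ → ℝ} {a b : ℝ} (K : ℝ)
    (hu : ContinuousOn u (Icc a b)) (hu' : ∀ x ∈ Ico a b, HasDerivWithinAt u (u' x) (Ici x) x)
    (ha : 0 ≤ u a) (hK : ∀ x ∈ Ico a b, u x < 0 → K * u x ≤ u' x) :
    ∀ x ∈ Icc a b, 0 ≤ u x := by
  intro x hx
  have fence : ∀ δ > 0, -u x ≤ δ * exp ((K + 1) * (x - a)) := by
    intro δ hδ
    refine image_le_of_deriv_right_lt_deriv_boundary (f := fun t => -u t) hu.neg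
      (fun t ht => (hu' t ht).neg) (B := fun t => δ * exp ((K + 1) * (t - a)))
      (B' := fun t => δ * exp ((K + 1) * (t - a)) * (K + 1)) ?_ (fun t => ?_) ?_ hx
    · simp only [sub_self, mul_zero, exp_zero, mul_one]
      linarith
    · have := (((hasDerivAt_id t).sub_const a).const_mul (K + 1)).exp.const_mul δ
      simpa [mul_assoc] using this
    · intro t ht hcontact
      have hB : 0 < δ * exp ((K + 1) * (t - a)) := by positivity
      have hut : u t = -(δ * exp ((K + 1) * (t - a))) := by linarith
      have hKu := hK t ht (by linarith)
      rw [hut] at hKu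
      linarith
  by_contra! hneg
  have hfence := fence (-u x / 2 / exp ((K + 1) * (x - a))) (div_pos (by linarith) (exp_pos _))
  rw [div_mul_cancel₀ _ (exp_ne_zero _)] at hfence
  linarith

theorem nonneg_of_hasDerivWithinAt_Ici_of_neg {u u' : ℝ → ℝ} {a : ℝ}
    (hu : ∀ t ∈ Ici a, HasDerivWithinAt u (u' t) (Ici a) t) (ha : 0 ≤ u a)
    (hK : ∀ b, ∃ K, ∀ t ∈ Ico a b, u t < 0 → K * u t ≤ u' t) :
    ∀ t ∈ Ici a, 0 ≤ u t := by
  intro t ht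
  obtain ⟨K, hK⟩ := hK t
  exact nonneg_of_deriv_right_ge_mul_of_neg K
    (fun x hx => (hu x hx.1).continuousWithinAt.mono Icc_subset_Ici_self)
    (fun x hx => (hu x hx.1).mono (Ici_subset_Ici.2 hx.1)) ha hK t ⟨ht, le_rfl⟩

/-- The right-hand side of the proportion equation, with `f` in place of `α (D + φ t)`. -/
def proportionRHS (f α₁ α₂ x : ℝ) : ℝ := f * x ^ 2 - (f + α₁ + α₂) * x + α₂

section proportionRHS

variable {f α₁ α₂ x : ℝ}

theorem proportionRHS_nonneg_of_nonpos (hf : 0 ≤ f) (hα₁ : 0 ≤ α₁) (hα₂ : 0 ≤ α₂) (hx : x ≤ 0) :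
    0 ≤ proportionRHS f α₁ α₂ x := by
  unfold proportionRHS
  nlinarith [mul_nonneg hf (sq_nonneg x)]

theorem proportionRHS_le_of_one_le {K : ℝ} (hα₁ : 0 ≤ α₁) (hα₂ : 0 ≤ α₂) (hx : 1 ≤ x)
    (hK : f * x ≤ K) : proportionRHS f α₁ α₂ x ≤ K * (x - 1) := by
  have hK' : 0 ≤ K - f * x + α₂ := by linarith
  have hx' : 0 ≤ x - 1 := by linarith
  unfold proportionRHS
  nlinarith [mul_nonneg hK' hx', mul_nonneg hα₁ (zero_le_one.trans hx)]

theorem proportionRHS_le_linear (hf : 0 ≤ f) (hx₀ : 0 ≤ x) (hx₁ : x ≤ 1) :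
    proportionRHS f α₁ α₂ x ≤ α₂ - (α₁ + α₂) * x := by
  unfold proportionRHS
  nlinarith [mul_nonneg hf (mul_nonneg hx₀ (sub_nonneg.2 hx₁))]

end proportionRHS

/-- The solution of `y' = β - s y` with `y 0 = y₀`. -/
noncomputable def linearRelaxation (y₀ β s t : ℝ) : ℝ := y₀ * exp (-s * t) + β / s * (1 - exp (-s * t))

theorem hasDerivAt_linearRelaxation {s : ℝ} (hs : s ≠ 0) (y₀ β t : ℝ) :
    HasDerivAt (linearRelaxation y₀ β s) (β - s * linearRelaxation y₀ β s t) t := by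
  have hform : linearRelaxation y₀ β s = fun t => β / s + (y₀ - β / s) * exp (-s * t) := by
    funext t; unfold linearRelaxation; ring
  rw [hform]
  refine ((((hasDerivAt_id' t).const_mul (-s)).exp.const_mul (y₀ - β / s)).const_add
    (β / s)).congr_deriv ?_
  field_simp
  ring

theorem tendsto_linearRelaxation {s : ℝ} (hs : 0 < s) (y₀ β : ℝ) :
    Tendsto (linearRelaxation y₀ β s) atTop (𝓝 (β / s)) := by
  have hexp : Tendsto (fun t => exp (-s * t)) atTop (𝓝 0) :=
    tendsto_exp_atBot.comp (tendsto_id.const_mul_atTop_of_neg (neg_neg_of_pos hs))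
  unfold linearRelaxation
  simpa using
    (hexp.const_mul y₀).add (((tendsto_const_nhds (x := (1 : ℝ))).sub hexp).const_mul (β / s))

section Riccati

variable {f p : ℝ → ℝ} {α₁ α₂ : ℝ}

theorem proportion_nonneg (hα₁ : 0 ≤ α₁) (hα₂ : 0 ≤ α₂) (hf : ∀ t ∈ Ici (0 : ℝ), 0 ≤ f t)
    (hp : ∀ t ∈ Ici (0 : ℝ), HasDerivWithinAt p (proportionRHS (f t) α₁ α₂ (p t)) (Ici 0) t)
    (hp₀ : 0 ≤ p 0) : ∀ t ∈ Ici (0 : ℝ), 0 ≤ p t :=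
  nonneg_of_hasDerivWithinAt_Ici_of_neg hp hp₀ fun _ => ⟨0, fun t ht hneg => by
    simpa using proportionRHS_nonneg_of_nonpos (hf t ht.1) hα₁ hα₂ hneg.le⟩

theorem proportion_le_one {M : ℝ} (hα₁ : 0 ≤ α₁) (hα₂ : 0 ≤ α₂)
    (hf : ∀ t ∈ Ici (0 : ℝ), 0 ≤ f t) (hfM : ∀ t ∈ Ici (0 : ℝ), f t ≤ M)
    (hp : ∀ t ∈ Ici (0 : ℝ), HasDerivWithinAt p (proportionRHS (f t) α₁ α₂ (p t)) (Ici 0) t)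
    (hp₀ : p 0 ≤ 1) : ∀ t ∈ Ici (0 : ℝ), p t ≤ 1 := by
  have hcont : ContinuousOn p (Ici 0) := fun t ht => (hp t ht).continuousWithinAt
  have key := nonneg_of_hasDerivWithinAt_Ici_of_neg (u := fun t => 1 - p t)
    (fun t ht => (hp t ht).const_sub 1) (sub_nonneg.2 hp₀) fun b => by
    -- above `1` the quadratic term is controlled by a bound `C` for `p` on `[0, b]`
    obtain ⟨C, hC⟩ := isCompact_Icc.bddAbove_image (hcont.mono (Icc_subset_Ici_self : Icc 0 b ⊆ Ici 0))
    refine ⟨M * C, fun t ht hneg => ?_⟩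
    have hpt : 1 < p t := by linarith
    have hM : 0 ≤ M := (hf t ht.1).trans (hfM t ht.1)
    have hfp : f t * p t ≤ M * C :=
      mul_le_mul (hfM t ht.1) (hC (mem_image_of_mem p (Ico_subset_Icc_self ht))) (by linarith) hM
    linarith [proportionRHS_le_of_one_le hα₁ hα₂ hpt.le hfp]
  exact fun t ht => sub_nonneg.1 (key t ht)

theorem proportion_le_linearRelaxation (hs : α₁ + α₂ ≠ 0) (hf : ∀ t ∈ Ici (0 : ℝ), 0 ≤ f t)
    (hp : ∀ t ∈ Ici (0 : ℝ), HasDerivWithinAt p (proportionRHS (f t) α₁ α₂ (p t)) (Ici 0) t)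
    (hp01 : ∀ t ∈ Ici (0 : ℝ), p t ∈ Icc (0 : ℝ) 1) :
    ∀ t ∈ Ici (0 : ℝ), p t ≤ linearRelaxation (p 0) α₂ (α₁ + α₂) t := by
  have key := nonneg_of_hasDerivWithinAt_Ici_of_neg
    (u := fun t => linearRelaxation (p 0) α₂ (α₁ + α₂) t - p t)
    (fun t ht => (hasDerivAt_linearRelaxation hs (p 0) α₂ t).hasDerivWithinAt.sub (hp t ht))
    (by simp [linearRelaxation]) fun _ => ⟨-(α₁ + α₂), fun t ht _ => by
      linarith [proportionRHS_le_linear (α₁ := α₁) (α₂ := α₂) (hf t ht.1) (hp01 t ht.1).1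
        (hp01 t ht.1).2]⟩
  exact fun t ht => sub_nonneg.1 (key t ht)

end Riccati

theorem riccati_proportion_upper_bound_general
    (D a α α₁ α₂ : ℝ)
    (hDa : a < D) (hα : 0 < α) (hα₁ : 0 ≤ α₁) (hα₂ : 0 ≤ α₂)
    (hsum : 0 < α₁ + α₂)
    (φ : ℝ → ℝ)
    (hφbdd : ∀ t ∈ Set.Ici (0:ℝ), φ t ∈ Set.Icc (-a) a)
    (p : ℝ → ℝ) (hp0 : p 0 ∈ Set.Icc (0:ℝ) 1)
    (hp : ∀ t ∈ Set.Ici (0:ℝ),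
      HasDerivWithinAt p
        (α * (D + φ t) * p t ^ 2 - (α * (D + φ t) + α₁ + α₂) * p t + α₂)
        (Set.Ici 0) t) :
    (∀ t ∈ Set.Ici (0:ℝ), p t ∈ Set.Icc (0:ℝ) 1 ∧
      p t ≤ p 0 * Real.exp (-(α₁ + α₂) * t) +
        (α₂ / (α₁ + α₂)) * (1 - Real.exp (-(α₁ + α₂) * t))) ∧
    Filter.limsup p Filter.atTop ≤ α₂ / (α₁ + α₂) := by
  have hf : ∀ t ∈ Ici (0 : ℝ), 0 ≤ α * (D + φ t) := fun t ht => by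
    nlinarith [(hφbdd t ht).1]
  have hfM : ∀ t ∈ Ici (0 : ℝ), α * (D + φ t) ≤ α * (D + a) := fun t ht => by
    nlinarith [(hφbdd t ht).2]
  have hmem : ∀ t ∈ Ici (0 : ℝ), p t ∈ Icc (0 : ℝ) 1 := fun t ht =>
    ⟨proportion_nonneg hα₁ hα₂ hf hp hp0.1 t ht, proportion_le_one hα₁ hα₂ hf hfM hp hp0.2 t ht⟩
  have hbound := proportion_le_linearRelaxation hsum.ne' hf hp hmem
  refine ⟨fun t ht => ⟨hmem t ht, hbound t ht⟩, ?_⟩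
  have hlim := tendsto_linearRelaxation hsum (p 0) α₂
  have hle : p ≤ᶠ[atTop] linearRelaxation (p 0) α₂ (α₁ + α₂) :=
    (eventually_ge_atTop 0).mono hbound
  have hcobdd : IsCoboundedUnder (· ≤ ·) atTop p :=
    isCoboundedUnder_le_of_eventually_le atTop ((eventually_ge_atTop 0).mono fun t ht => (hmem t ht).1)
  exact (limsup_le_limsup hle hcobdd hlim.isBoundedUnder_le).trans_eq hlim.limsup_eq

/-- Any solution of the Riccati equation for the proportion `p` with
`p(0) ∈ [0,1]` stays in `[0,1]` and satisfies
`p(t) ≤ p(0)e^{−(α₁+α₂)t} + (α₂/(α₁+α₂))(1 − e^{−(α₁+α₂)t})`; in particular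
`limsup_{t→∞} p(t) ≤ α₂/(α₁+α₂)`. -/
theorem riccati_proportion_upper_bound
    (D a α α₁ α₂ : ℝ)
    (ha : 0 < a) (hDa : a < D) (hα : 0 < α) (hα₁ : 0 ≤ α₁) (hα₂ : 0 ≤ α₂)
    (hsum : 0 < α₁ + α₂)
    (φ : ℝ → ℝ) (hφcont : ContinuousOn φ (Set.Ici 0))
    (hφbdd : ∀ t ∈ Set.Ici (0:ℝ), φ t ∈ Set.Icc (-a) a)
    (p : ℝ → ℝ) (hp0 : p 0 ∈ Set.Icc (0:ℝ) 1)
    (hp : ∀ t ∈ Set.Ici (0:ℝ),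
      HasDerivWithinAt p
        (α * (D + φ t) * p t ^ 2 - (α * (D + φ t) + α₁ + α₂) * p t + α₂)
        (Set.Ici 0) t) :
    (∀ t ∈ Set.Ici (0:ℝ), p t ∈ Set.Icc (0:ℝ) 1 ∧
      p t ≤ p 0 * Real.exp (-(α₁ + α₂) * t) +
        (α₂ / (α₁ + α₂)) * (1 - Real.exp (-(α₁ + α₂) * t))) ∧
    Filter.limsup p Filter.atTop ≤ α₂ / (α₁ + α₂) :=
  riccati_proportion_upper_bound_general D a α α₁ α₂ hDa hα hα₁ hα₂ hsum φ hφbdd p hp0 hp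
end

section
/- Assume α₁ + α₂ > 0 and let p : [0, ∞) → ℝ be a solution of the Riccati equation p'(t) = α(D + φ(t)) p(t)² − (α(D + φ(t)) + α₁ + α₂) p(t) + α₂ with p(0) ∈ [0, 1]. Then liminf_{t→∞} p(t) ≥ α₂/(α₁ + α₂ + α D_max); that is, for every ε > 0 there exists t_ε > 0 such that p(t) ≥ α₂/(α₁ + α₂ + α D_max) − ε for all t ≥ t_ε. -/
/-!
Write `f(t, x)` for the right-hand side of the equation, `c = α₁ + α₂ + α D_max` and
`L = α₂ / c`. Along the solution, `f(t, p) = (p - 1) g(t) - α₁ = (-p) h(t) - α₂` with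
continuous `g`, `h`, so the integrating factors `exp (-∫ g)`, `exp (-∫ h)` show that `[0, 1]`
is invariant. On `x ≥ 0` one has `f(t, x) - c (L - x) = α (D + φ t) x² + α (a - φ t) x ≥ 0`,
so `p' ≥ c (L - p)` and hence `p t ≥ L + (p 0 - L) e^{-c t}`, which tends to `L`.
-/

open Set Filter Topology Real

lemma exists_hasDerivAt_of_continuousOn_Ici {g : ℝ → ℝ} {t₀ : ℝ} (hg : ContinuousOn g (Ici t₀)) :
    ∃ G : ℝ → ℝ, ∀ t ∈ Ici t₀, HasDerivAt G (g t) t := by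
  have hcont : Continuous fun s => g (max t₀ s) :=
    hg.comp_continuous (continuous_const.max continuous_id) fun s => mem_Ici.2 (le_max_left _ _)
  refine ⟨fun u => ∫ s in t₀..u, g (max t₀ s), fun t ht => ?_⟩
  simpa [max_eq_right (mem_Ici.1 ht)] using (hcont.integral_hasStrictDerivAt t₀ t).hasDerivAt

section IntegratingFactor

variable {q q' g G : ℝ → ℝ} {t₀ : ℝ}

lemma antitoneOn_mul_exp_neg_of_deriv_le_mul
    (hq : ∀ t ∈ Ici t₀, HasDerivWithinAt q (q' t) (Ici t₀) t)
    (hG : ∀ t ∈ Ici t₀, HasDerivWithinAt G (g t) (Ici t₀) t)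
    (hle : ∀ t ∈ Ici t₀, q' t ≤ g t * q t) :
    AntitoneOn (fun t => q t * exp (-G t)) (Ici t₀) := by
  have hderiv : ∀ t ∈ Ici t₀, HasDerivWithinAt (fun t => q t * exp (-G t))
      ((q' t - g t * q t) * exp (-G t)) (Ici t₀) t := fun t ht =>
    ((hq t ht).mul (hG t ht).neg.exp).congr_deriv (by simp only [Pi.neg_apply]; ring)
  refine antitoneOn_of_hasDerivWithinAt_nonpos (f' := fun t => (q' t - g t * q t) * exp (-G t))
    (convex_Ici t₀) (fun t ht => (hderiv t ht).continuousWithinAt) (fun t ht => ?_)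
    (fun t ht => ?_)
  · rw [interior_Ici] at ht ⊢
    exact (hderiv t (Ioi_subset_Ici_self ht)).mono Ioi_subset_Ici_self
  · rw [interior_Ici] at ht
    exact mul_nonpos_of_nonpos_of_nonneg (sub_nonpos.2 (hle t (Ioi_subset_Ici_self ht)))
      (exp_pos _).le

lemma nonpos_of_deriv_le_mul (hg : ContinuousOn g (Ici t₀))
    (hq : ∀ t ∈ Ici t₀, HasDerivWithinAt q (q' t) (Ici t₀) t)
    (hle : ∀ t ∈ Ici t₀, q' t ≤ g t * q t) (h₀ : q t₀ ≤ 0) :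
    ∀ t ∈ Ici t₀, q t ≤ 0 := by
  obtain ⟨G, hG⟩ := exists_hasDerivAt_of_continuousOn_Ici hg
  have hanti := antitoneOn_mul_exp_neg_of_deriv_le_mul hq
    (fun t ht => (hG t ht).hasDerivWithinAt) hle
  intro t ht
  have h := hanti self_mem_Ici ht (mem_Ici.1 ht)
  have : q t * exp (-G t) ≤ 0 :=
    h.trans (mul_nonpos_of_nonpos_of_nonneg h₀ (exp_pos _).le)
  exact nonpos_of_mul_nonpos_left this (exp_pos _)

lemma add_sub_mul_exp_le_of_mul_sub_le_deriv {p p' : ℝ → ℝ} {c L : ℝ}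
    (hp : ∀ t ∈ Ici t₀, HasDerivWithinAt p (p' t) (Ici t₀) t)
    (hle : ∀ t ∈ Ici t₀, c * (L - p t) ≤ p' t) :
    ∀ t ∈ Ici t₀, L + (p t₀ - L) * exp (-(c * (t - t₀))) ≤ p t := by
  have hanti := antitoneOn_mul_exp_neg_of_deriv_le_mul (q := fun t => L - p t) (g := fun _ => -c)
    (G := fun t => -c * t) (fun t ht => (hp t ht).const_sub L)
    (fun t _ => ((hasDerivAt_id t).const_mul (-c)).hasDerivWithinAt.congr_deriv (mul_one _))
    (fun t ht => by linarith [hle t ht])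
  intro t ht
  have h := hanti self_mem_Ici ht (mem_Ici.1 ht)
  simp only [neg_mul, neg_neg] at h
  have hsplit : exp (c * t₀) = exp (-(c * (t - t₀))) * exp (c * t) := by
    rw [← exp_add]; ring_nf
  rw [hsplit, ← mul_assoc] at h
  have := le_of_mul_le_mul_right h (exp_pos _)
  linarith

end IntegratingFactor

lemma tendsto_add_mul_exp_neg_mul_sub {c : ℝ} (hc : 0 < c) (L K t₀ : ℝ) :
    Tendsto (fun t => L + K * exp (-(c * (t - t₀)))) atTop (𝓝 L) := by
  have hexp := tendsto_exp_neg_atTop_nhds_zero.comp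
    ((tendsto_atTop_add_const_right _ (-t₀) tendsto_id).const_mul_atTop hc)
  simpa [Function.comp_def, sub_eq_add_neg] using tendsto_const_nhds.add (hexp.const_mul K)

section EventualLowerBound

variable {f u : ℝ → ℝ} {L : ℝ}

lemma le_liminf_of_tendsto_of_eventually_le {B : ℝ} (hf : Tendsto f atTop (𝓝 L))
    (hfu : ∀ᶠ t in atTop, f t ≤ u t) (hu : ∀ᶠ t in atTop, u t ≤ B) :
    L ≤ liminf u atTop :=
  hf.liminf_eq ▸ liminf_le_liminf hfu hf.isBoundedUnder_ge
    (isCoboundedUnder_ge_of_eventually_le _ hu)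

lemma exists_pos_forall_ge_sub_le_of_tendsto (hf : Tendsto f atTop (𝓝 L))
    (hfu : ∀ᶠ t in atTop, f t ≤ u t) {ε : ℝ} (hε : 0 < ε) :
    ∃ tε : ℝ, 0 < tε ∧ ∀ t ≥ tε, L - ε ≤ u t := by
  have hev : ∀ᶠ t in atTop, L - ε ≤ u t :=
    ((tendsto_order.1 hf).1 (L - ε) (by linarith)).and hfu |>.mono fun t ht => ht.1.le.trans ht.2
  obtain ⟨t₁, ht₁⟩ := eventually_atTop.1 hev
  exact ⟨max t₁ 1, by positivity, fun t ht => ht₁ t (le_of_max_le_left ht)⟩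

end EventualLowerBound

def riccatiRHS (D α α₁ α₂ : ℝ) (φ : ℝ → ℝ) (t x : ℝ) : ℝ :=
  α * (D + φ t) * x ^ 2 - (α * (D + φ t) + α₁ + α₂) * x + α₂

section Riccati

variable {D a α α₁ α₂ : ℝ} {φ p : ℝ → ℝ}

lemma riccati_le_one (hα₁ : 0 ≤ α₁) (hφ : ContinuousOn φ (Ici 0))
    (hp : ∀ t ∈ Ici (0 : ℝ), HasDerivWithinAt p (riccatiRHS D α α₁ α₂ φ t (p t)) (Ici 0) t)
    (h₀ : p 0 ≤ 1) : ∀ t ∈ Ici (0 : ℝ), p t ≤ 1 := by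
  have hpc : ContinuousOn p (Ici 0) := fun t ht => (hp t ht).continuousWithinAt
  have h := nonpos_of_deriv_le_mul (q := fun t => p t - 1)
    (g := fun t => α * (D + φ t) * p t - (α₁ + α₂)) (by fun_prop)
    (fun t ht => (hp t ht).sub_const 1) (fun t _ => by simp only [riccatiRHS]; linarith)
    (by linarith)
  exact fun t ht => sub_nonpos.1 (h t ht)

lemma riccati_nonneg (hα₂ : 0 ≤ α₂) (hφ : ContinuousOn φ (Ici 0))
    (hp : ∀ t ∈ Ici (0 : ℝ), HasDerivWithinAt p (riccatiRHS D α α₁ α₂ φ t (p t)) (Ici 0) t)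
    (h₀ : 0 ≤ p 0) : ∀ t ∈ Ici (0 : ℝ), 0 ≤ p t := by
  have hpc : ContinuousOn p (Ici 0) := fun t ht => (hp t ht).continuousWithinAt
  have h := nonpos_of_deriv_le_mul (q := fun t => -p t)
    (g := fun t => α * (D + φ t) * p t - (α * (D + φ t) + α₁ + α₂)) (by fun_prop)
    (fun t ht => (hp t ht).neg) (fun t _ => by simp only [riccatiRHS]; linarith)
    (by linarith)
  exact fun t ht => neg_nonpos.1 (h t ht)

lemma mul_sub_le_riccatiRHS (hα : 0 ≤ α) (hDa : a ≤ D) (hc : α₁ + α₂ + α * (D + a) ≠ 0)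
    {t x : ℝ} (hφt : φ t ∈ Icc (-a) a) (hx : 0 ≤ x) :
    (α₁ + α₂ + α * (D + a)) * (α₂ / (α₁ + α₂ + α * (D + a)) - x) ≤
      riccatiRHS D α α₁ α₂ φ t x := by
  have hgap : 0 ≤ α * (D + φ t) * x ^ 2 + α * (a - φ t) * x := by
    have : 0 ≤ D + φ t := by linarith [hφt.1]
    have : 0 ≤ a - φ t := by linarith [hφt.2]
    positivity
  rw [mul_sub, mul_div_cancel₀ _ hc, riccatiRHS]
  linarith

end Riccati

theorem riccati_proportion_lower_bound_general
    (D a α α₁ α₂ : ℝ)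
    (ha : 0 < a) (hDa : a < D) (hα : 0 < α) (hα₁ : 0 ≤ α₁) (hα₂ : 0 ≤ α₂)
    (φ : ℝ → ℝ) (hφcont : ContinuousOn φ (Set.Ici 0))
    (hφbdd : ∀ t ∈ Set.Ici (0:ℝ), φ t ∈ Set.Icc (-a) a)
    (p : ℝ → ℝ) (hp0 : p 0 ∈ Set.Icc (0:ℝ) 1)
    (hp : ∀ t ∈ Set.Ici (0:ℝ),
      HasDerivWithinAt p
        (α * (D + φ t) * p t ^ 2 - (α * (D + φ t) + α₁ + α₂) * p t + α₂)
        (Set.Ici 0) t) :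
    α₂ / (α₁ + α₂ + α * (D + a)) ≤ Filter.liminf p Filter.atTop ∧
    ∀ ε : ℝ, 0 < ε → ∃ tε : ℝ, 0 < tε ∧
      ∀ t ≥ tε, α₂ / (α₁ + α₂ + α * (D + a)) - ε ≤ p t := by
  set c := α₁ + α₂ + α * (D + a)
  have hc : 0 < c := add_pos_of_nonneg_of_pos (add_nonneg hα₁ hα₂) (mul_pos hα (by linarith))
  have hnonneg := riccati_nonneg hα₂ hφcont hp hp0.1
  have hlower := add_sub_mul_exp_le_of_mul_sub_le_deriv hp fun t ht =>
    mul_sub_le_riccatiRHS hα.le hDa.le hc.ne' (hφbdd t ht) (hnonneg t ht)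
  have hlim := tendsto_add_mul_exp_neg_mul_sub hc (α₂ / c) (p 0 - α₂ / c) 0
  have hev := (eventually_ge_atTop 0).mono hlower
  exact ⟨le_liminf_of_tendsto_of_eventually_le hlim hev
      ((eventually_ge_atTop 0).mono (riccati_le_one hα₁ hφcont hp hp0.2)),
    fun ε hε => exists_pos_forall_ge_sub_le_of_tendsto hlim hev hε⟩

/-- Any solution of the Riccati equation for the proportion `p` with
`p(0) ∈ [0,1]` satisfies `liminf_{t→∞} p(t) ≥ α₂/(α₁+α₂+α D_max)`, i.e. for every `ε > 0`
there is `t_ε > 0` with `p(t) ≥ α₂/(α₁+α₂+α D_max) − ε` for all `t ≥ t_ε`. -/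
theorem riccati_proportion_lower_bound
    (D a α α₁ α₂ : ℝ)
    (ha : 0 < a) (hDa : a < D) (hα : 0 < α) (hα₁ : 0 ≤ α₁) (hα₂ : 0 ≤ α₂)
    (hsum : 0 < α₁ + α₂)
    (φ : ℝ → ℝ) (hφcont : ContinuousOn φ (Set.Ici 0))
    (hφbdd : ∀ t ∈ Set.Ici (0:ℝ), φ t ∈ Set.Icc (-a) a)
    (p : ℝ → ℝ) (hp0 : p 0 ∈ Set.Icc (0:ℝ) 1)
    (hp : ∀ t ∈ Set.Ici (0:ℝ),
      HasDerivWithinAt p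
        (α * (D + φ t) * p t ^ 2 - (α * (D + φ t) + α₁ + α₂) * p t + α₂)
        (Set.Ici 0) t) :
    α₂ / (α₁ + α₂ + α * (D + a)) ≤ Filter.liminf p Filter.atTop ∧
    ∀ ε : ℝ, 0 < ε → ∃ tε : ℝ, 0 < tε ∧
      ∀ t ≥ tε, α₂ / (α₁ + α₂ + α * (D + a)) - ε ≤ p t :=
  riccati_proportion_lower_bound_general D a α α₁ α₂ ha hDa hα hα₁ hα₂ φ hφcont hφbdd p hp0 hp
end

section
/- Assume the noise path additionally satisfies lim_{t→∞} (1/t) ∫₀ᵗ φ(τ) dτ = 0, and assume the extinction condition D α · α₂/(α₁ + α₂ + α D_max) + d > g. Then for every solution (s, m₁, m₂) of the random chemostat system on [0, ∞) with values in ℝ³₊ and m₁(0) > 0, m₂(0) > 0, the total microbial biomass becomes extinct: lim_{t→∞} (m₁(t) + m₂(t)) = 0. -/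
/-!
Write `z = m₁ + m₂` and `p = m₁ / z`. The fraction solves the Riccati equation
`p' = α₂ - (α₁ + α₂ + α (D + φ)) p + α (D + φ) p²`, in which the substrate does not appear, and
`p' ≥ α₂ - (α₁ + α₂ + α D_max) p`; by comparison `p` eventually exceeds any
`ρ < α₂ / (α₁ + α₂ + α D_max)`. Then `(log z)' ≤ g - d - ρ α (D + φ)`, whose time average tends to
`g - d - ρ α D`, which is negative for a suitable such `ρ` by the extinction condition. Hence
`log z → -∞`.
-/

open Set Filter Topology Real

theorem mul_exp_le_of_neg_mul_le_deriv {f f' : ℝ → ℝ} {δ K a b x : ℝ}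
    (hf : ∀ t ∈ Ici a, HasDerivWithinAt f (f' t) (Ici a) t) (ha : δ ≤ f a)
    (bound : ∀ t ∈ Ico a b, -K * f t ≤ f' t) (hx : x ∈ Icc a b) :
    δ * exp (-K * (x - a)) ≤ f x := by
  have h := le_gronwallBound_of_liminf_deriv_right_le (f := -f) (f' := -f') (K := -K) (ε := 0)
    (fun t ht => (hf t ht.1).continuousWithinAt.neg.mono Icc_subset_Ici_self)
    (fun t ht _ hr => ((hf t ht.1).mono (Ici_subset_Ici.2 ht.1)).neg.liminf_right_slope_le hr)
    (neg_le_neg ha) (fun t ht => by simp only [Pi.neg_apply]; linarith [bound t ht]) x hx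
  rw [gronwallBound_ε0] at h
  simp only [Pi.neg_apply] at h
  linarith

theorem hasDerivWithinAt_integral_of_continuousOn_Ici {φ : ℝ → ℝ} {a t : ℝ}
    (hφ : ContinuousOn φ (Ici a)) (ht : a ≤ t) :
    HasDerivWithinAt (fun u => ∫ τ in a..u, φ τ) (φ t) (Ici a) t := by
  have hψ : Continuous fun τ => φ (max τ a) :=
    hφ.comp_continuous (continuous_id.max continuous_const) fun τ => le_max_right τ a
  have h := (hψ.integral_hasStrictDerivAt a t).hasDerivAt.hasDerivWithinAt (s := Ici a)
  rw [max_eq_left ht] at h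
  refine h.congr_of_mem (fun u hu => intervalIntegral.integral_congr fun τ hτ => ?_) ht
  rw [uIcc_of_le hu] at hτ
  simp only [max_eq_left hτ.1]

theorem tendsto_atBot_of_tendsto_div_neg {V : ℝ → ℝ} {c : ℝ}
    (hV : Tendsto (fun t => V t / t) atTop (𝓝 c)) (hc : c < 0) : Tendsto V atTop atBot := by
  refine (tendsto_id.atTop_mul_neg hc hV).congr' ?_
  filter_upwards [eventually_ne_atTop 0] with t ht
  exact mul_div_cancel₀ (V t) ht

theorem tendsto_mul_add_div_of_tendsto_inv_mul {F : ℝ → ℝ} {α D l : ℝ}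
    (hF : Tendsto (fun t => (1 / t) * F t) atTop (𝓝 l)) :
    Tendsto (fun t => α * (D * t + F t) / t) atTop (𝓝 (α * (D + l))) := by
  refine ((hF.const_add D).const_mul α).congr' ?_
  filter_upwards [eventually_ne_atTop 0] with t ht
  field_simp

theorem tendsto_zero_of_deriv_le_mul {z z' V v : ℝ → ℝ} {T c : ℝ}
    (hz : ∀ t ∈ Ici T, HasDerivWithinAt z (z' t) (Ici T) t) (hpos : ∀ t ∈ Ici T, 0 < z t)
    (hV : ∀ t ∈ Ici T, HasDerivWithinAt V (v t) (Ici T) t)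
    (hle : ∀ t ∈ Ici T, z' t ≤ v t * z t)
    (hVc : Tendsto (fun t => V t / t) atTop (𝓝 c)) (hc : c < 0) :
    Tendsto z atTop (𝓝 0) := by
  have hanti : AntitoneOn (fun t => log (z t) - V t) (Ici T) := by
    refine antitoneOn_of_hasDerivWithinAt_nonpos (f' := fun t => z' t / z t - v t) (convex_Ici T)
      (fun t ht => ((hz t ht).continuousWithinAt.log (hpos t ht).ne').sub
        (hV t ht).continuousWithinAt) (fun t ht => ?_) (fun t ht => ?_) <;>
      simp only [interior_Ici] at ht ⊢ <;> replace ht := Ioi_subset_Ici_self ht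
    · exact (((hz t ht).log (hpos t ht).ne').sub (hV t ht)).mono Ioi_subset_Ici_self
    · rw [sub_nonpos, div_le_iff₀ (hpos t ht)]
      exact hle t ht
  have hlog : Tendsto (fun t => log (z t)) atTop atBot := by
    refine tendsto_atBot_mono' atTop ?_ (tendsto_atBot_add_const_left _ (log (z T) - V T)
      (tendsto_atBot_of_tendsto_div_neg hVc hc))
    filter_upwards [eventually_ge_atTop T] with t ht
    linarith [hanti self_mem_Ici ht ht]
  refine (tendsto_exp_atBot.comp hlog).congr' ?_
  filter_upwards [eventually_ge_atTop T] with t ht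
  exact exp_log (hpos t ht)

/- Two compartments exchanging biomass at rates `α₁, α₂`, sharing the per-capita growth rate `q`,
with extra loss rate `w` in the first one. For the chemostat, `q = -d + g μ(s) - r₁ m₁ - r₂ m₂` and
`w = α (D + φ)`. -/
section Exchange

variable {m₁ m₂ q w : ℝ → ℝ} {α₁ α₂ : ℝ}

theorem hasDerivWithinAt_exchange_add {s : Set ℝ} {t : ℝ}
    (h₁ : HasDerivWithinAt m₁ (m₁ t * (q t - w t - α₁) + α₂ * m₂ t) s t)
    (h₂ : HasDerivWithinAt m₂ (m₂ t * (q t - α₂) + α₁ * m₁ t) s t) :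
    HasDerivWithinAt (fun u => m₁ u + m₂ u) ((m₁ t + m₂ t) * q t - w t * m₁ t) s t :=
  (h₁.add h₂).congr_deriv (by ring)

theorem hasDerivWithinAt_exchange_fraction {s : Set ℝ} {t : ℝ}
    (h₁ : HasDerivWithinAt m₁ (m₁ t * (q t - w t - α₁) + α₂ * m₂ t) s t)
    (h₂ : HasDerivWithinAt m₂ (m₂ t * (q t - α₂) + α₁ * m₁ t) s t) (hz : m₁ t + m₂ t ≠ 0) :
    HasDerivWithinAt (fun u => m₁ u / (m₁ u + m₂ u))
      (α₂ - (α₁ + α₂ + w t) * (m₁ t / (m₁ t + m₂ t)) + w t * (m₁ t / (m₁ t + m₂ t)) ^ 2) s t :=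
  (h₁.div (hasDerivWithinAt_exchange_add h₁ h₂) hz).congr_deriv (by field_simp; ring)

theorem exchange_add_pos {L : ℝ → ℝ}
    (hm₁ : ∀ t ∈ Ici (0:ℝ), HasDerivWithinAt m₁ (m₁ t * (q t - w t - α₁) + α₂ * m₂ t) (Ici 0) t)
    (hm₂ : ∀ t ∈ Ici (0:ℝ), HasDerivWithinAt m₂ (m₂ t * (q t - α₂) + α₁ * m₁ t) (Ici 0) t)
    (hm₁_nonneg : ∀ t ∈ Ici (0:ℝ), 0 ≤ m₁ t) (hm₂_nonneg : ∀ t ∈ Ici (0:ℝ), 0 ≤ m₂ t)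
    (hw : ∀ t ∈ Ici (0:ℝ), 0 ≤ w t) (hL : ContinuousOn L (Ici 0))
    (hqw : ∀ t ∈ Ici (0:ℝ), L t ≤ q t - w t) (h0 : 0 < m₁ 0 + m₂ 0) :
    ∀ t ∈ Ici (0:ℝ), 0 < m₁ t + m₂ t := by
  intro b hb
  obtain ⟨Q, hQ⟩ := isCompact_Icc.bddBelow_image (K := Icc 0 b)
    (hL.mono Icc_subset_Ici_self)
  have hQ' : ∀ t ∈ Icc 0 b, Q ≤ q t - w t := fun t ht =>
    (hQ (mem_image_of_mem L ht)).trans (hqw t ht.1)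
  have key := mul_exp_le_of_neg_mul_le_deriv (f := fun u => m₁ u + m₂ u) (K := -Q)
    (fun t ht => hasDerivWithinAt_exchange_add (hm₁ t ht) (hm₂ t ht)) le_rfl
    (fun t ht => ?_) (show b ∈ Icc 0 b from ⟨hb, le_rfl⟩)
  · exact (mul_pos h0 (exp_pos _)).trans_le key
  · have hQt := hQ' t (Ico_subset_Icc_self ht)
    have h₁ := mul_le_mul_of_nonneg_left hQt (hm₁_nonneg t ht.1)
    have h₂ := mul_le_mul_of_nonneg_left (hQt.trans (sub_le_self _ (hw t ht.1))) (hm₂_nonneg t ht.1)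
    linarith

theorem le_exchange_fraction {W : ℝ}
    (hm₁ : ∀ t ∈ Ici (0:ℝ), HasDerivWithinAt m₁ (m₁ t * (q t - w t - α₁) + α₂ * m₂ t) (Ici 0) t)
    (hm₂ : ∀ t ∈ Ici (0:ℝ), HasDerivWithinAt m₂ (m₂ t * (q t - α₂) + α₁ * m₁ t) (Ici 0) t)
    (hm₁_nonneg : ∀ t ∈ Ici (0:ℝ), 0 ≤ m₁ t) (hw : ∀ t ∈ Ici (0:ℝ), 0 ≤ w t)
    (hwW : ∀ t ∈ Ici (0:ℝ), w t ≤ W) (hK : 0 < α₁ + α₂ + W)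
    (hz : ∀ t ∈ Ici (0:ℝ), 0 < m₁ t + m₂ t) :
    ∀ t ∈ Ici (0:ℝ),
      α₂ / (α₁ + α₂ + W) * (1 - exp (-(α₁ + α₂ + W) * t)) ≤ m₁ t / (m₁ t + m₂ t) := by
  intro x hx
  set K := α₁ + α₂ + W
  have hp : ∀ t ∈ Ici (0:ℝ), 0 ≤ m₁ t / (m₁ t + m₂ t) := fun t ht =>
    div_nonneg (hm₁_nonneg t ht) (hz t ht).le
  have key := mul_exp_le_of_neg_mul_le_deriv (f := fun u => m₁ u / (m₁ u + m₂ u) - α₂ / K)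
    (δ := -(α₂ / K)) (K := K) (b := x)
    (fun t ht =>
      (hasDerivWithinAt_exchange_fraction (hm₁ t ht) (hm₂ t ht) (hz t ht).ne').sub_const _)
    (by linarith [hp 0 self_mem_Ici]) (fun t ht => ?_) ⟨hx, le_rfl⟩
  · rw [sub_zero] at key
    linarith
  · -- `p' + K (p - α₂ / K) = (W - w) p + w p²`
    have ht := ht.1
    have hKα : K * (α₂ / K) = α₂ := mul_div_cancel₀ _ hK.ne'
    have := mul_nonneg (sub_nonneg.2 (hwW t ht)) (hp t ht)
    have := mul_nonneg (hw t ht) (sq_nonneg (m₁ t / (m₁ t + m₂ t)))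
    nlinarith

theorem eventually_le_exchange_fraction {W ρ : ℝ}
    (hm₁ : ∀ t ∈ Ici (0:ℝ), HasDerivWithinAt m₁ (m₁ t * (q t - w t - α₁) + α₂ * m₂ t) (Ici 0) t)
    (hm₂ : ∀ t ∈ Ici (0:ℝ), HasDerivWithinAt m₂ (m₂ t * (q t - α₂) + α₁ * m₁ t) (Ici 0) t)
    (hm₁_nonneg : ∀ t ∈ Ici (0:ℝ), 0 ≤ m₁ t) (hw : ∀ t ∈ Ici (0:ℝ), 0 ≤ w t)
    (hwW : ∀ t ∈ Ici (0:ℝ), w t ≤ W) (hK : 0 < α₁ + α₂ + W)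
    (hz : ∀ t ∈ Ici (0:ℝ), 0 < m₁ t + m₂ t) (hρ : ρ < α₂ / (α₁ + α₂ + W)) :
    ∀ᶠ t in atTop, ρ ≤ m₁ t / (m₁ t + m₂ t) := by
  have hlim : Tendsto (fun t => α₂ / (α₁ + α₂ + W) * (1 - exp (-(α₁ + α₂ + W) * t))) atTop
      (𝓝 (α₂ / (α₁ + α₂ + W) * (1 - 0))) :=
    ((tendsto_exp_atBot.comp (tendsto_id.const_mul_atTop_of_neg (neg_lt_zero.2 hK))).const_sub
      1).const_mul _
  rw [sub_zero, mul_one] at hlim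
  filter_upwards [hlim.eventually_const_le hρ, eventually_ge_atTop 0] with t hρt ht
  exact hρt.trans (le_exchange_fraction hm₁ hm₂ hm₁_nonneg hw hwW hK hz t ht)

theorem tendsto_exchange_add_zero {ρ Q ω : ℝ} {Ω : ℝ → ℝ}
    (hm₁ : ∀ t ∈ Ici (0:ℝ), HasDerivWithinAt m₁ (m₁ t * (q t - w t - α₁) + α₂ * m₂ t) (Ici 0) t)
    (hm₂ : ∀ t ∈ Ici (0:ℝ), HasDerivWithinAt m₂ (m₂ t * (q t - α₂) + α₁ * m₁ t) (Ici 0) t)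
    (hw : ∀ t ∈ Ici (0:ℝ), 0 ≤ w t) (hz : ∀ t ∈ Ici (0:ℝ), 0 < m₁ t + m₂ t)
    (hρ : ∀ᶠ t in atTop, ρ ≤ m₁ t / (m₁ t + m₂ t)) (hq : ∀ t ∈ Ici (0:ℝ), q t ≤ Q)
    (hΩ : ∀ t ∈ Ici (0:ℝ), HasDerivWithinAt Ω (w t) (Ici 0) t)
    (hΩω : Tendsto (fun t => Ω t / t) atTop (𝓝 ω)) (hQ : Q < ρ * ω) :
    Tendsto (fun t => m₁ t + m₂ t) atTop (𝓝 0) := by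
  obtain ⟨T, hT⟩ := eventually_atTop.1 (hρ.and (eventually_ge_atTop 0))
  have hT0 : Ici T ⊆ Ici 0 := Ici_subset_Ici.2 (hT T le_rfl).2
  refine tendsto_zero_of_deriv_le_mul (T := T) (V := fun t => Q * t - ρ * Ω t)
    (v := fun t => Q - ρ * w t) (c := Q - ρ * ω)
    (fun t ht => (hasDerivWithinAt_exchange_add (hm₁ t (hT0 ht)) (hm₂ t (hT0 ht))).mono hT0)
    (fun t ht => hz t (hT0 ht))
    (fun t ht => (((hasDerivWithinAt_id t _).const_mul Q).sub
      ((hΩ t (hT0 ht)).const_mul ρ)).mono hT0 |>.congr_deriv (by ring))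
    (fun t ht => ?_) ?_ (by linarith)
  · have hzt := hz t (hT0 ht)
    have hρz : ρ * (m₁ t + m₂ t) ≤ m₁ t := (le_div_iff₀ hzt).1 (hT t ht).1
    have := mul_le_mul_of_nonneg_left (hq t (hT0 ht)) hzt.le
    have := mul_le_mul_of_nonneg_left hρz (hw t (hT0 ht))
    nlinarith
  · refine ((hΩω.const_mul ρ).const_sub Q).congr' ?_
    filter_upwards [eventually_ne_atTop 0] with t ht
    field_simp

end Exchange

theorem random_chemostat_extinction_general
    (D a sIn c g d r α α₁ α₂ r₁ r₂ : ℝ)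
    (ha : 0 < a) (hDa : a < D)
    (hg : 0 < g)
    (hα : 0 < α) (hα₁ : 0 < α₁) (hα₂ : 0 < α₂) (hr₁ : 0 < r₁) (hr₂ : 0 < r₂)
    (φ : ℝ → ℝ) (hφcont : ContinuousOn φ (Set.Ici 0))
    (hφbdd : ∀ t ∈ Set.Ici (0:ℝ), φ t ∈ Set.Icc (-a) a)
    (hφavg : Filter.Tendsto (fun t => (1 / t) * ∫ τ in (0:ℝ)..t, φ τ)
      Filter.atTop (nhds 0))
    (μ : ℝ → ℝ) (hμ0 : μ 0 = 0)
    (hμpos : ∀ x : ℝ, 0 < x → 0 < μ x) (hμle : ∀ x : ℝ, 0 ≤ x → μ x ≤ 1)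
    (hcond : g < D * α * (α₂ / (α₁ + α₂ + α * (D + a))) + d)
    (s m₁ m₂ : ℝ → ℝ)
    (hsol : ∀ t ∈ (Set.Ici (0:ℝ)),
        HasDerivWithinAt s ((D + φ t) * (sIn - α * s t) - c * μ (s t) * (m₁ t + m₂ t) + r * d * m₁ t) (Set.Ici (0:ℝ)) t ∧
        HasDerivWithinAt m₁ (m₁ t * (-d - α * (D + φ t) + g * μ (s t) - r₁ * m₁ t - r₂ * m₂ t - α₁) + α₂ * m₂ t) (Set.Ici (0:ℝ)) t ∧
        HasDerivWithinAt m₂ (m₂ t * (-d + g * μ (s t) - r₁ * m₁ t - r₂ * m₂ t - α₂) + α₁ * m₁ t) (Set.Ici (0:ℝ)) t)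
    (hoct : ∀ t ∈ (Set.Ici (0:ℝ)), 0 ≤ s t ∧ 0 ≤ m₁ t ∧ 0 ≤ m₂ t)
    (hm₁0 : 0 < m₁ 0) :
    Filter.Tendsto (fun t => m₁ t + m₂ t) Filter.atTop (nhds 0) := by
  have hD : 0 < D := ha.trans hDa
  have hαD : 0 < α * D := by positivity
  have hm₁_nonneg : ∀ t ∈ Ici (0:ℝ), 0 ≤ m₁ t := fun t ht => (hoct t ht).2.1
  have hm₂_nonneg : ∀ t ∈ Ici (0:ℝ), 0 ≤ m₂ t := fun t ht => (hoct t ht).2.2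
  have hμs : ∀ t ∈ Ici (0:ℝ), 0 ≤ μ (s t) ∧ μ (s t) ≤ 1 := fun t ht =>
    ⟨(hoct t ht).1.eq_or_lt.elim (fun h => h ▸ hμ0.ge) fun h => (hμpos _ h).le,
      hμle _ (hoct t ht).1⟩
  have hm₁ : ∀ t ∈ Ici (0:ℝ), HasDerivWithinAt m₁ (m₁ t * ((-d + g * μ (s t) - r₁ * m₁ t
      - r₂ * m₂ t) - α * (D + φ t) - α₁) + α₂ * m₂ t) (Ici 0) t :=
    fun t ht => (hsol t ht).2.1.congr_deriv (by ring)
  have hm₂ := fun t ht => (hsol t ht).2.2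
  have hm₁c : ContinuousOn m₁ (Ici 0) := fun t ht => (hm₁ t ht).continuousWithinAt
  have hm₂c : ContinuousOn m₂ (Ici 0) := fun t ht => (hm₂ t ht).continuousWithinAt
  have hw : ∀ t ∈ Ici (0:ℝ), 0 ≤ α * (D + φ t) := fun t ht =>
    mul_nonneg hα.le (by linarith [(hφbdd t ht).1])
  have hwW : ∀ t ∈ Ici (0:ℝ), α * (D + φ t) ≤ α * (D + a) := fun t ht =>
    mul_le_mul_of_nonneg_left (by linarith [(hφbdd t ht).2]) hα.le
  have hz := exchange_add_pos hm₁ hm₂ hm₁_nonneg hm₂_nonneg hw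
    (L := fun t => -d - α * (D + a) - r₁ * m₁ t - r₂ * m₂ t) (by fun_prop)
    (fun t ht => by linarith [hwW t ht, mul_nonneg hg.le (hμs t ht).1])
    (add_pos_of_pos_of_nonneg hm₁0 (hm₂_nonneg 0 self_mem_Ici))
  obtain ⟨ρ, hgdρ, hρ⟩ := exists_between ((div_lt_iff₀ hαD).2 (by linarith) :
    (g - d) / (α * D) < α₂ / (α₁ + α₂ + α * (D + a)))
  have hfrac := eventually_le_exchange_fraction hm₁ hm₂ hm₁_nonneg hw hwW (by positivity) hz hρ
  have hq : ∀ t ∈ Ici (0:ℝ), -d + g * μ (s t) - r₁ * m₁ t - r₂ * m₂ t ≤ g - d := fun t ht => by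
    linarith [mul_le_of_le_one_right hg.le (hμs t ht).2, mul_nonneg hr₁.le (hm₁_nonneg t ht),
      mul_nonneg hr₂.le (hm₂_nonneg t ht)]
  have hΩ : ∀ t ∈ Ici (0:ℝ), HasDerivWithinAt (fun t => α * (D * t + ∫ τ in (0:ℝ)..t, φ τ))
      (α * (D + φ t)) (Ici 0) t := fun t ht =>
    ((((hasDerivWithinAt_id t _).const_mul D).add
      (hasDerivWithinAt_integral_of_continuousOn_Ici hφcont ht)).const_mul α).congr_deriv (by ring)
  exact tendsto_exchange_add_zero hm₁ hm₂ hw hz hfrac hq hΩ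
    (by simpa using tendsto_mul_add_div_of_tendsto_inv_mul (α := α) (D := D) hφavg)
    ((div_lt_iff₀ hαD).1 hgdρ)

/-- **Extinction.** If the noise path has zero time average and
`D α · α₂/(α₁+α₂+α D_max) + d > g`, then the total microbial biomass of every nonnegative
global solution tends to `0`. -/
theorem random_chemostat_extinction
    (D a sIn c g d r α α₁ α₂ r₁ r₂ : ℝ)
    (ha : 0 < a) (hDa : a < D) (hsIn : 0 < sIn) (hc : 0 < c)
    (hg : 0 < g) (hgc : g ≤ c) (hd : 0 < d) (hr0 : 0 < r) (hr1 : r < 1)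
    (hα : 0 < α) (hα₁ : 0 < α₁) (hα₂ : 0 < α₂) (hr₁ : 0 < r₁) (hr₂ : 0 < r₂)
    (φ : ℝ → ℝ) (hφcont : ContinuousOn φ (Set.Ici 0))
    (hφbdd : ∀ t ∈ Set.Ici (0:ℝ), φ t ∈ Set.Icc (-a) a)
    (hφavg : Filter.Tendsto (fun t => (1 / t) * ∫ τ in (0:ℝ)..t, φ τ)
      Filter.atTop (nhds 0))
    (μ : ℝ → ℝ) (hμC1 : ContDiffOn ℝ 1 μ (Set.Ici 0)) (hμ0 : μ 0 = 0)
    (hμpos : ∀ x : ℝ, 0 < x → 0 < μ x) (hμle : ∀ x : ℝ, 0 ≤ x → μ x ≤ 1)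
    (hcond : g < D * α * (α₂ / (α₁ + α₂ + α * (D + a))) + d)
    (s m₁ m₂ : ℝ → ℝ)
    (hsol : ∀ t ∈ (Set.Ici (0:ℝ)),
        HasDerivWithinAt s ((D + φ t) * (sIn - α * s t) - c * μ (s t) * (m₁ t + m₂ t) + r * d * m₁ t) (Set.Ici (0:ℝ)) t ∧
        HasDerivWithinAt m₁ (m₁ t * (-d - α * (D + φ t) + g * μ (s t) - r₁ * m₁ t - r₂ * m₂ t - α₁) + α₂ * m₂ t) (Set.Ici (0:ℝ)) t ∧
        HasDerivWithinAt m₂ (m₂ t * (-d + g * μ (s t) - r₁ * m₁ t - r₂ * m₂ t - α₂) + α₁ * m₁ t) (Set.Ici (0:ℝ)) t)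
    (hoct : ∀ t ∈ (Set.Ici (0:ℝ)), 0 ≤ s t ∧ 0 ≤ m₁ t ∧ 0 ≤ m₂ t)
    (hm₁0 : 0 < m₁ 0) (hm₂0 : 0 < m₂ 0) :
    Filter.Tendsto (fun t => m₁ t + m₂ t) Filter.atTop (nhds 0) :=
  random_chemostat_extinction_general D a sIn c g d r α α₁ α₂ r₁ r₂ ha hDa hg hα hα₁ hα₂ hr₁ hr₂ φ
    hφcont hφbdd hφavg μ hμ0 hμpos hμle hcond s m₁ m₂ hsol hoct hm₁0
end

section
/- Assume ϑ := min{α D_min, d + α D_min − g c⁻¹ r d, d} > 0. Then there exists s* > 0, depending only on the parameters (not on the noise path φ or on the solution), such that for every solution (s, m₁, m₂) of the random chemostat system on [0, ∞) with values in ℝ³₊ there exists T > 0 with s(t) ≥ s* for all t ≥ T. Moreover, s* can be taken so that the continuous function f(σ) := D_min s_in − α D_max σ − μ(σ)(g D_max s_in/ϑ + ε) (for a suitable fixed ε > 0) is strictly positive on [0, s*]. -/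
/-! The weighted total mass `v = g s + c (m₁ + m₂)` does not see the consumption terms, and the
definition of `ϑ` gives `v' ≤ g D_max s_in - ϑ v`; by Grönwall, eventually
`c (m₁ + m₂) ≤ v ≤ g D_max s_in / ϑ + ε`. From then on `s' ≥ f(s) > D_min s_in / 2` whenever
`s ≤ s*`, so `s` climbs above `s*` in finite time and never falls back below it. -/

open Set Filter Topology

section
variable {v v' : ℝ → ℝ} {T : ℝ}

lemma eventually_le_div_add_of_deriv_le_sub_mul {A ϑ ε : ℝ} (hϑ : 0 < ϑ) (hε : 0 < ε)
    (hv : ∀ x ∈ Ici T, HasDerivWithinAt v (v' x) (Ici T) x)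
    (hb : ∀ x ∈ Ici T, v' x ≤ A - ϑ * v x) :
    ∀ᶠ t in atTop, v t ≤ A / ϑ + ε := by
  have hbound (t : ℝ) (ht : T ≤ t) : v t ≤ gronwallBound (v T) (-ϑ) A (t - T) :=
    le_gronwallBound_of_liminf_deriv_right_le
      (fun x hx => (hv x hx.1).continuousWithinAt.mono Icc_subset_Ici_self)
      (fun x hx _ hr => ((hv x hx.1).mono (Ici_subset_Ici.2 hx.1)).liminf_right_slope_le hr)
      le_rfl (fun x hx => by linarith [hb x hx.1]) t ⟨ht, le_rfl⟩
  have hexp : Tendsto (fun t => Real.exp (-ϑ * (t - T))) atTop (𝓝 0) :=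
    Real.tendsto_exp_atBot.comp <|
      (tendsto_atTop_add_const_right _ (-T) tendsto_id).const_mul_atTop_of_neg (neg_neg_of_pos hϑ)
  have hlim : Tendsto (fun t => gronwallBound (v T) (-ϑ) A (t - T)) atTop (𝓝 (A / ϑ)) := by
    rw [gronwallBound_of_K_ne_0 (neg_ne_zero.2 hϑ.ne')]
    convert (hexp.const_mul (v T)).add ((hexp.sub_const 1).const_mul (A / -ϑ)) using 2
    simp [div_neg]
  filter_upwards [eventually_ge_atTop T, hlim.eventually_le_const (lt_add_of_pos_right _ hε)]
    with t ht hlt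
  exact (hbound t ht).trans hlt

lemma le_of_deriv_pos_at_level {K : ℝ} (hv : ∀ x ∈ Ici T, HasDerivWithinAt v (v' x) (Ici T) x)
    (hT : K ≤ v T) (hK : ∀ x ∈ Ici T, v x = K → 0 < v' x) : ∀ t ∈ Ici T, K ≤ v t := fun _ ht =>
  image_le_of_deriv_right_lt_deriv_boundary' (f := fun _ => K) (f' := 0) continuousOn_const
    (fun x _ => hasDerivWithinAt_const x _ K) hT
    (fun x hx => (hv x hx.1).continuousWithinAt.mono Icc_subset_Ici_self)
    (fun x hx => (hv x hx.1).mono (Ici_subset_Ici.2 hx.1))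
    (fun x hx hvx => hK x hx.1 hvx.symm) ⟨ht, le_rfl⟩

lemma exists_le_of_deriv_ge_below {K δ : ℝ} (hv : ∀ x ∈ Ici T, HasDerivWithinAt v (v' x) (Ici T) x)
    (hδ : 0 < δ) (hK : ∀ x ∈ Ici T, v x < K → δ ≤ v' x) : ∃ t ∈ Ici T, K ≤ v t := by
  by_contra! hlt
  set t := T + |K - v T| / δ
  have ht : T ≤ t := le_add_of_nonneg_right (by positivity)
  have hgrow : v T + δ * (t - T) ≤ v t :=
    image_le_of_deriv_right_le_deriv_boundary (f := fun x => v T + δ * (x - T)) (f' := fun _ => δ)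
      (by fun_prop)
      (fun x _ => by
        simpa using (((hasDerivWithinAt_id x _).sub_const T).const_mul δ).const_add (v T))
      (by simp) (fun x hx => (hv x hx.1).continuousWithinAt.mono Icc_subset_Ici_self)
      (fun x hx => (hv x hx.1).mono (Ici_subset_Ici.2 hx.1))
      (fun x hx => hK x hx.1 (hlt x hx.1)) ⟨ht, le_rfl⟩
  have hstep : δ * (t - T) = |K - v T| := by simp only [t]; field_simp; ring
  linarith [hlt t ht, le_abs_self (K - v T)]

lemma eventually_le_of_deriv_ge_below {K δ : ℝ}
    (hv : ∀ x ∈ Ici T, HasDerivWithinAt v (v' x) (Ici T) x)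
    (hδ : 0 < δ) (hK : ∀ x ∈ Ici T, v x ≤ K → δ ≤ v' x) : ∀ᶠ t in atTop, K ≤ v t := by
  obtain ⟨t₁, ht₁, hK₁⟩ := exists_le_of_deriv_ge_below hv hδ fun x hx hlt => hK x hx hlt.le
  have hsub : Ici t₁ ⊆ Ici T := Ici_subset_Ici.2 ht₁
  refine eventually_atTop.2 ⟨t₁, le_of_deriv_pos_at_level
    (fun x hx => (hv x (hsub hx)).mono hsub) hK₁ fun x hx hvx => ?_⟩
  exact hδ.trans_le (hK x (hsub hx) hvx.le)
end

lemma chemostat_lyapunov_deriv_le {D a sIn c g d r α α₁ α₂ r₁ r₂ ϑ φ s m₁ m₂ u : ℝ}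
    (hsIn : 0 ≤ sIn) (hc : 0 < c) (hg : 0 ≤ g) (hα : 0 ≤ α) (hr₁ : 0 ≤ r₁) (hr₂ : 0 ≤ r₂)
    (hϑ₁ : ϑ ≤ α * (D - a)) (hϑ₂ : ϑ ≤ d + α * (D - a) - g * c⁻¹ * r * d) (hϑ₃ : ϑ ≤ d)
    (hφ : φ ∈ Icc (-a) a) (hs : 0 ≤ s) (hm₁ : 0 ≤ m₁) (hm₂ : 0 ≤ m₂) :
    g * ((D + φ) * (sIn - α * s) - c * u * (m₁ + m₂) + r * d * m₁) +
        c * ((m₁ * (-d - α * (D + φ) + g * u - r₁ * m₁ - r₂ * m₂ - α₁) + α₂ * m₂) +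
          (m₂ * (-d + g * u - r₁ * m₁ - r₂ * m₂ - α₂) + α₁ * m₁)) ≤
      g * (D + a) * sIn - ϑ * (g * s + c * (m₁ + m₂)) := by
  obtain ⟨hφl, hφu⟩ := hφ
  have hϑc : ϑ * c ≤ c * d + c * (α * (D - a)) - g * r * d := by
    have := mul_le_mul_of_nonneg_right hϑ₂ hc.le
    rwa [show (d + α * (D - a) - g * c⁻¹ * r * d) * c = c * d + c * (α * (D - a)) - g * r * d by
      field_simp] at this
  nlinarith [mul_le_mul_of_nonneg_left hφu (mul_nonneg hg hsIn),
    mul_le_mul_of_nonneg_right (hϑ₁.trans (show α * (D - a) ≤ α * (D + φ) by nlinarith))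
      (mul_nonneg hg hs),
    mul_le_mul_of_nonneg_right hϑc hm₁, mul_nonneg (mul_nonneg hc.le hα) hm₁,
    mul_le_mul_of_nonneg_right hϑ₃ (mul_nonneg hc.le hm₂),
    mul_nonneg (mul_nonneg hc.le (add_nonneg (mul_nonneg hr₁ hm₁) (mul_nonneg hr₂ hm₂)))
      (add_nonneg hm₁ hm₂),
    mul_nonneg (mul_nonneg hc.le hα) (mul_nonneg hm₁ (by linarith : 0 ≤ φ + a))]

lemma chemostat_substrate_deriv_ge {D a sIn c r d α φ s m₁ m₂ u K : ℝ}
    (hsIn : 0 ≤ sIn) (hr : 0 ≤ r) (hd : 0 ≤ d) (hα : 0 ≤ α)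
    (hφ : φ ∈ Icc (-a) a) (hs : 0 ≤ s) (hm₁ : 0 ≤ m₁) (hu : 0 ≤ u) (hM : c * (m₁ + m₂) ≤ K) :
    (D - a) * sIn - α * (D + a) * s - u * K ≤
      (D + φ) * (sIn - α * s) - c * u * (m₁ + m₂) + r * d * m₁ := by
  obtain ⟨hφl, hφu⟩ := hφ
  nlinarith [mul_le_mul_of_nonneg_left hM hu, mul_le_mul_of_nonneg_right hφl hsIn,
    mul_le_mul_of_nonneg_right hφu (mul_nonneg hα hs), mul_nonneg (mul_nonneg hr hd) hm₁]

theorem random_chemostat_substrate_persistence_general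
    (D a sIn c g d r α α₁ α₂ r₁ r₂ : ℝ)
    (hDa : a < D) (hsIn : 0 < sIn) (hc : 0 < c)
    (hg : 0 < g) (hd : 0 < d) (hr0 : 0 < r)
    (hα : 0 < α) (hr₁ : 0 < r₁) (hr₂ : 0 < r₂)
    (μ : ℝ → ℝ) (hμC1 : ContDiffOn ℝ 1 μ (Set.Ici 0)) (hμ0 : μ 0 = 0)
    (hμpos : ∀ x : ℝ, 0 < x → 0 < μ x)
    (ϑ : ℝ) (hϑdef : ϑ = min (α * (D - a)) (min (d + α * (D - a) - g * c⁻¹ * r * d) d))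
    (hϑpos : 0 < ϑ) :
    ∃ sstar : ℝ, 0 < sstar ∧ ∃ ε : ℝ, 0 < ε ∧
      (∀ σ ∈ Set.Icc (0:ℝ) sstar,
        0 < (D - a) * sIn - α * (D + a) * σ - μ σ * (g * (D + a) * sIn / ϑ + ε)) ∧
      (∀ φ : ℝ → ℝ, ContinuousOn φ (Set.Ici 0) →
        (∀ t ∈ Set.Ici (0:ℝ), φ t ∈ Set.Icc (-a) a) →
        ∀ s m₁ m₂ : ℝ → ℝ,
          (∀ t ∈ (Set.Ici (0:ℝ)),
            HasDerivWithinAt s ((D + φ t) * (sIn - α * s t) - c * μ (s t) * (m₁ t + m₂ t) + r * d * m₁ t) (Set.Ici (0:ℝ)) t ∧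
            HasDerivWithinAt m₁ (m₁ t * (-d - α * (D + φ t) + g * μ (s t) - r₁ * m₁ t - r₂ * m₂ t - α₁) + α₂ * m₂ t) (Set.Ici (0:ℝ)) t ∧
            HasDerivWithinAt m₂ (m₂ t * (-d + g * μ (s t) - r₁ * m₁ t - r₂ * m₂ t - α₂) + α₁ * m₁ t) (Set.Ici (0:ℝ)) t) →
          (∀ t ∈ (Set.Ici (0:ℝ)), 0 ≤ s t ∧ 0 ≤ m₁ t ∧ 0 ≤ m₂ t) →
          ∃ T : ℝ, 0 < T ∧ ∀ t ≥ T, sstar ≤ s t) := by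
  obtain ⟨hϑ₁, hϑ₂, hϑ₃⟩ : ϑ ≤ α * (D - a) ∧ ϑ ≤ d + α * (D - a) - g * c⁻¹ * r * d ∧ ϑ ≤ d := by
    simpa only [le_min_iff] using hϑdef.le
  set K := g * (D + a) * sIn / ϑ + 1
  have hδ : 0 < (D - a) * sIn / 2 := half_pos (mul_pos (sub_pos.2 hDa) hsIn)
  -- `s*` is where the drain `α D_max σ + μ σ K` on the substrate is still below half its inflow.
  have hdrain : ContinuousWithinAt (fun σ => α * (D + a) * σ + μ σ * K) (Ici 0) 0 :=
    (continuousWithinAt_id.const_mul _).add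
      ((hμC1.continuousOn.continuousWithinAt self_mem_Ici).mul continuousWithinAt_const)
  obtain ⟨sstar, hsstar, hsmall⟩ : ∃ sstar > 0,
      ∀ σ ∈ Icc 0 sstar, α * (D + a) * σ + μ σ * K < (D - a) * sIn / 2 :=
    mem_nhdsGE_iff_exists_Icc_subset.1
      (hdrain.eventually_lt_const (u := (D - a) * sIn / 2) (by simpa [hμ0] using hδ))
  refine ⟨sstar, hsstar, 1, one_pos, fun σ hσ => by linarith [hsmall σ hσ], ?_⟩
  intro φ _ hφ s m₁ m₂ hode hnn
  have hbio : ∀ᶠ t in atTop, g * s t + c * (m₁ t + m₂ t) ≤ K :=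
    eventually_le_div_add_of_deriv_le_sub_mul hϑpos one_pos
      (fun t ht => ((hode t ht).1.const_mul g).add
        (((hode t ht).2.1.add (hode t ht).2.2).const_mul c))
      (fun t ht => chemostat_lyapunov_deriv_le hsIn.le hc hg.le hα.le hr₁.le hr₂.le
        hϑ₁ hϑ₂ hϑ₃ (hφ t ht) (hnn t ht).1 (hnn t ht).2.1 (hnn t ht).2.2)
  obtain ⟨T₀, hT₀⟩ := (hbio.and (eventually_ge_atTop 0)).exists_forall_of_atTop
  have hT₀0 : Ici T₀ ⊆ Ici 0 := Ici_subset_Ici.2 (hT₀ T₀ le_rfl).2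
  have hpersist : ∀ᶠ t in atTop, sstar ≤ s t := by
    refine eventually_le_of_deriv_ge_below (fun t ht => (hode t (hT₀0 ht)).1.mono hT₀0) hδ
      fun t ht hst => ?_
    obtain ⟨hs, hm₁, -⟩ := hnn t (hT₀0 ht)
    have hμs : 0 ≤ μ (s t) := hs.eq_or_lt.elim (fun h => h ▸ hμ0.ge) fun h => (hμpos _ h).le
    have hbio_t : c * (m₁ t + m₂ t) ≤ K := by linarith [(hT₀ t ht).1, mul_nonneg hg.le hs]
    linarith [hsmall (s t) ⟨hs, hst⟩, chemostat_substrate_deriv_ge (D := D) hsIn.le hr0.le hd.le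
      hα.le (hφ t (hT₀0 ht)) hs hm₁ hμs hbio_t]
  obtain ⟨T, hT⟩ := eventually_atTop.1 hpersist
  exact ⟨max T 1, by positivity, fun t ht => hT t (le_of_max_le_left ht)⟩

/-- If `ϑ > 0`, there is `s* > 0`, depending only on the parameters, such
that every nonnegative global solution (for any admissible noise path) eventually satisfies
`s(t) ≥ s*`; moreover `s*` can be chosen so that, for a suitable `ε > 0`, the function
`f(σ) = D_min s_in − α D_max σ − μ(σ)(g D_max s_in/ϑ + ε)` is strictly positive on `[0, s*]`. -/
theorem random_chemostat_substrate_persistence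
    (D a sIn c g d r α α₁ α₂ r₁ r₂ : ℝ)
    (ha : 0 < a) (hDa : a < D) (hsIn : 0 < sIn) (hc : 0 < c)
    (hg : 0 < g) (hgc : g ≤ c) (hd : 0 < d) (hr0 : 0 < r) (hr1 : r < 1)
    (hα : 0 < α) (hα₁ : 0 ≤ α₁) (hα₂ : 0 ≤ α₂) (hr₁ : 0 < r₁) (hr₂ : 0 < r₂)
    (μ : ℝ → ℝ) (hμC1 : ContDiffOn ℝ 1 μ (Set.Ici 0)) (hμ0 : μ 0 = 0)
    (hμpos : ∀ x : ℝ, 0 < x → 0 < μ x) (hμle : ∀ x : ℝ, 0 ≤ x → μ x ≤ 1)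
    (ϑ : ℝ) (hϑdef : ϑ = min (α * (D - a)) (min (d + α * (D - a) - g * c⁻¹ * r * d) d))
    (hϑpos : 0 < ϑ) :
    ∃ sstar : ℝ, 0 < sstar ∧ ∃ ε : ℝ, 0 < ε ∧
      (∀ σ ∈ Set.Icc (0:ℝ) sstar,
        0 < (D - a) * sIn - α * (D + a) * σ - μ σ * (g * (D + a) * sIn / ϑ + ε)) ∧
      (∀ φ : ℝ → ℝ, ContinuousOn φ (Set.Ici 0) →
        (∀ t ∈ Set.Ici (0:ℝ), φ t ∈ Set.Icc (-a) a) →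
        ∀ s m₁ m₂ : ℝ → ℝ,
          (∀ t ∈ (Set.Ici (0:ℝ)),
            HasDerivWithinAt s ((D + φ t) * (sIn - α * s t) - c * μ (s t) * (m₁ t + m₂ t) + r * d * m₁ t) (Set.Ici (0:ℝ)) t ∧
            HasDerivWithinAt m₁ (m₁ t * (-d - α * (D + φ t) + g * μ (s t) - r₁ * m₁ t - r₂ * m₂ t - α₁) + α₂ * m₂ t) (Set.Ici (0:ℝ)) t ∧
            HasDerivWithinAt m₂ (m₂ t * (-d + g * μ (s t) - r₁ * m₁ t - r₂ * m₂ t - α₂) + α₁ * m₁ t) (Set.Ici (0:ℝ)) t) →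
          (∀ t ∈ (Set.Ici (0:ℝ)), 0 ≤ s t ∧ 0 ≤ m₁ t ∧ 0 ≤ m₂ t) →
          ∃ T : ℝ, 0 < T ∧ ∀ t ≥ T, sstar ≤ s t) :=
  random_chemostat_substrate_persistence_general D a sIn c g d r α α₁ α₂ r₁ r₂ hDa hsIn hc hg hd hr0
    hα hr₁ hr₂ μ hμC1 hμ0 hμpos ϑ hϑdef hϑpos
end
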